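/- arXiv:1602.03300 — 5 statements merged into one kernel-verified Lean document; each statement's English description precedes it below -/
import Mathlib

section
/- Let f be continuous, increasing, and regularly varying at infinity with index q > p > 1, with F(t) = ∫_B^t f(s) ds. Then the Keller–Osserman condition holds: ∫_B^∞ F(t)^{-1/p} dt < ∞. -/
open Filter MeasureTheory Real

theorem keller_osserman_condition
    (B p q : ℝ) (hB : 0 < B) (hp : 1 < p) (hq : p < q)
    (f : ℝ → ℝ)
    (hfpos : ∀ u, B ≤ u → 0 < f u)
    (hfcont : ContinuousOn f (Set.Ici B))
    (hfmono : StrictMonoOn f (Set.Ici B))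
    (hfRV : ∀ ξ : ℝ, 0 < ξ →
      Tendsto (fun u => f (ξ * u) / f u) atTop (nhds (ξ ^ q)))
    (F : ℝ → ℝ) (hF : ∀ t, F t = ∫ s in B..t, f s) :
    IntegrableOn (fun t => F t ^ (-(1 : ℝ) / p)) (Set.Ici B) := by
  have hp0 : 0 < p := by linarith
  set p' : ℝ := (p + q) / 2 with hp'def
  have hpp' : p < p' := by rw [hp'def]; linarith
  have hp'q : p' < q := by rw [hp'def]; linarith
  have hp'0 : 0 < p' := by linarith
  have hneg : -(1 : ℝ) / p < 0 := div_neg_of_neg_of_pos (by norm_num) hp0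
  have hne : -(1 : ℝ) / p ≠ 0 := hneg.ne
  have hmono := hfmono.monotoneOn
  have hfint : ∀ a t, B ≤ a → a ≤ t → IntervalIntegrable f volume a t := by
    intro a t ha hat
    apply (hfcont.mono ?_).intervalIntegrable
    rw [Set.uIcc_of_le hat]
    exact fun x hx => le_trans ha hx.1
  have hFnn : ∀ t, B ≤ t → 0 ≤ F t := by
    intro t ht
    rw [hF t]
    exact intervalIntegral.integral_nonneg ht fun u hu => (hfpos u hu.1).le
  -- lower bound F t ≥ f B * (t - B)
  have hFlb1 : ∀ t, B ≤ t → f B * (t - B) ≤ F t := by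
    intro t ht
    rw [hF t]
    calc f B * (t - B) = ∫ _ in B..t, f B := by
          rw [intervalIntegral.integral_const, smul_eq_mul]; ring
      _ ≤ ∫ s in B..t, f s := by
          apply intervalIntegral.integral_mono_on ht intervalIntegrable_const
            (hfint B t le_rfl ht)
          intro x hx
          exact hmono Set.self_mem_Ici hx.1 hx.1
  -- Step 1: find u0 and the doubling inequality
  have h2q : (2 : ℝ) ^ p' < 2 ^ q := Real.rpow_lt_rpow_of_exponent_lt one_lt_two hp'q
  obtain ⟨u1, hu1⟩ := Filter.eventually_atTop.mp ((hfRV 2 two_pos).eventually_const_lt h2q)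
  set u0 : ℝ := max u1 (max B 1) with hu0def
  have hu0B : B ≤ u0 := le_max_of_le_right (le_max_left _ _)
  have hu01 : (1 : ℝ) ≤ u0 := le_max_of_le_right (le_max_right _ _)
  have hu00 : 0 < u0 := lt_of_lt_of_le one_pos hu01
  have hstep : ∀ u, u0 ≤ u → 2 ^ p' * f u ≤ f (2 * u) := by
    intro u hu
    have h1 : (2 : ℝ) ^ p' < f (2 * u) / f u := hu1 u (le_trans (le_max_left _ _) hu)
    have h2 : 0 < f u := hfpos u (le_trans hu0B hu)
    exact le_of_lt ((lt_div_iff₀ h2).mp h1)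
  -- Step 2: pointwise lower bound on f
  have hbase : ∀ t, u0 ≤ t → t ≤ 2 * u0 → f u0 * (t / (2 * u0)) ^ p' ≤ f t := by
    intro t ht ht2
    have h1 : (t / (2 * u0)) ^ p' ≤ 1 := by
      apply Real.rpow_le_one (div_nonneg (by linarith) (by positivity)) _ hp'0.le
      rw [div_le_one (by positivity)]
      exact ht2
    calc f u0 * (t / (2 * u0)) ^ p' ≤ f u0 * 1 :=
          mul_le_mul_of_nonneg_left h1 (hfpos u0 hu0B).le
      _ = f u0 := mul_one _
      _ ≤ f t := hmono hu0B (le_trans hu0B ht) ht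
  have hkey : ∀ n : ℕ, ∀ t, u0 ≤ t → t ≤ u0 * 2 ^ n →
      f u0 * (t / (2 * u0)) ^ p' ≤ f t := by
    intro n
    induction n with
    | zero =>
        intro t ht ht'
        simp only [pow_zero, mul_one] at ht'
        exact hbase t ht (by linarith)
    | succ n ih =>
        intro t ht ht'
        rcases le_or_gt t (2 * u0) with h | h
        · exact hbase t ht h
        · have ht0 : 0 < t := by linarith
          have hs1 : u0 ≤ t / 2 := by linarith
          have hs2 : t / 2 ≤ u0 * 2 ^ n := by
            rw [pow_succ] at ht'; linarith
          have h3 := ih (t / 2) hs1 hs2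
          have h4 : 2 ^ p' * f (t / 2) ≤ f t := by
            have := hstep (t / 2) hs1
            rwa [show 2 * (t / 2) = t by ring] at this
          have heq : (t / (2 * u0)) ^ p' = 2 ^ p' * (t / 2 / (2 * u0)) ^ p' := by
            rw [← Real.mul_rpow (by norm_num : (0:ℝ) ≤ 2)
              (div_nonneg (div_nonneg ht0.le (by norm_num)) (by positivity))]
            congr 1
            field_simp
          calc f u0 * (t / (2 * u0)) ^ p'
              = 2 ^ p' * (f u0 * (t / 2 / (2 * u0)) ^ p') := by rw [heq]; ring
            _ ≤ 2 ^ p' * f (t / 2) :=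
                mul_le_mul_of_nonneg_left h3 (by positivity)
            _ ≤ f t := h4
  have hflb : ∀ t, u0 ≤ t → f u0 * (t / (2 * u0)) ^ p' ≤ f t := by
    intro t ht
    obtain ⟨n, hn⟩ := pow_unbounded_of_one_lt (t / u0) (one_lt_two (α := ℝ))
    apply hkey n t ht
    rw [mul_comm]
    exact le_of_lt ((div_lt_iff₀ hu00).mp hn)
  -- Step 3: lower bound on F for large t
  set c2 : ℝ := f u0 / (2 * (4 * u0) ^ p') with hc2
  have hc2pos : 0 < c2 := div_pos (hfpos u0 hu0B) (by positivity)
  have hFlb2 : ∀ t, 2 * u0 ≤ t → c2 * t ^ (p' + 1) ≤ F t := by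
    intro t ht
    have ht0 : 0 < t := by linarith
    have hBt2 : B ≤ t / 2 := by linarith
    have htt : t / 2 ≤ t := by linarith
    have h1 : t / 2 * f (t / 2) ≤ F t := by
      have hsplit : F t = F (t / 2) + ∫ s in (t / 2)..t, f s := by
        rw [hF t, hF (t / 2)]
        exact (intervalIntegral.integral_add_adjacent_intervals
          (hfint B (t / 2) le_rfl hBt2) (hfint (t / 2) t hBt2 htt)).symm
      have h2 : t / 2 * f (t / 2) ≤ ∫ s in (t / 2)..t, f s := by
        calc t / 2 * f (t / 2) = ∫ _ in (t / 2)..t, f (t / 2) := by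
              rw [intervalIntegral.integral_const, smul_eq_mul]; ring
          _ ≤ ∫ s in (t / 2)..t, f s := by
              apply intervalIntegral.integral_mono_on htt intervalIntegrable_const
                (hfint (t / 2) t hBt2 htt)
              intro x hx
              exact hmono hBt2 (le_trans hBt2 hx.1) hx.1
      have h3 : 0 ≤ F (t / 2) := hFnn (t / 2) hBt2
      linarith
    have h4 : u0 ≤ t / 2 := by linarith
    have h5 := hflb (t / 2) h4
    have h6 : t / 2 / (2 * u0) = t / (4 * u0) := by ring
    have hne4 : ((4 : ℝ) * u0) ^ p' ≠ 0 := by positivity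
    have h7 : c2 * t ^ (p' + 1) = t / 2 * (f u0 * (t / (4 * u0)) ^ p') := by
      rw [Real.rpow_add ht0, Real.rpow_one,
        Real.div_rpow ht0.le (by positivity : (0:ℝ) ≤ 4 * u0), hc2]
      field_simp
    calc c2 * t ^ (p' + 1) = t / 2 * (f u0 * (t / (4 * u0)) ^ p') := h7
      _ ≤ t / 2 * f (t / 2) := by
          apply mul_le_mul_of_nonneg_left _ (by linarith : (0:ℝ) ≤ t / 2)
          rw [← h6]; exact h5
      _ ≤ F t := h1
  -- continuity / measurability of F
  have hFcont : ContinuousOn F (Set.Ici B) := by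
    intro x hx
    have hx' : B ≤ x := hx
    have hint : IntegrableOn f (Set.Icc B (x + 1)) :=
      (hfcont.mono (fun y hy => hy.1)).integrableOn_Icc
    have h1 : ContinuousOn (fun t => ∫ s in B..t, f s) (Set.uIcc B (x + 1)) := by
      apply intervalIntegral.continuousOn_primitive_interval
      rwa [Set.uIcc_of_le (by linarith : B ≤ x + 1)]
    have h2 : ContinuousWithinAt F (Set.uIcc B (x + 1)) x := by
      have := h1 x (by rw [Set.uIcc_of_le (by linarith)]; exact ⟨hx', by linarith⟩)
      have hFeq : F = fun t => ∫ s in B..t, f s := funext hF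
      rw [hFeq]
      exact this
    apply h2.mono_of_mem_nhdsWithin
    rw [Set.uIcc_of_le (by linarith : B ≤ x + 1), ← Set.Ici_inter_Iic]
    exact Filter.inter_mem self_mem_nhdsWithin
      (mem_nhdsWithin_of_mem_nhds (Iic_mem_nhds (by linarith)))
  have hmeas : AEStronglyMeasurable (fun t => F t ^ (-(1 : ℝ) / p))
      (volume.restrict (Set.Ici B)) := by
    have h1 : AEMeasurable F (volume.restrict (Set.Ici B)) :=
      hFcont.aemeasurable measurableSet_Ici
    exact (h1.pow aemeasurable_const).aestronglyMeasurable
  -- assemble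
  have hBt1 : B ≤ 2 * u0 := by linarith
  have hIci : Set.Ici B = Set.Icc B (2 * u0) ∪ Set.Ioi (2 * u0) :=
    (Set.Icc_union_Ioi_eq_Ici hBt1).symm
  rw [hIci]
  apply MeasureTheory.IntegrableOn.union
  · -- near B
    have hg1 : IntegrableOn (fun t => f B ^ (-(1 : ℝ) / p) * (t - B) ^ (-(1 : ℝ) / p))
        (Set.Icc B (2 * u0)) := by
      have hr : (-1 : ℝ) < -(1 : ℝ) / p := by
        have h1 : (1 : ℝ) / p < 1 := by rw [div_lt_one hp0]; exact hp
        have h2 : -(1 : ℝ) / p = -(1 / p) := by ring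
        rw [h2]; linarith
      have h1 : IntervalIntegrable (fun t => (t - B) ^ (-(1 : ℝ) / p)) volume B (2 * u0) := by
        have h2 := (intervalIntegral.intervalIntegrable_rpow' (a := 0)
          (b := 2 * u0 - B) hr).comp_sub_right B
        simpa using h2
      rw [← intervalIntegrable_iff_integrableOn_Icc_of_le hBt1]
      exact h1.const_mul _
    apply Integrable.mono' hg1
      (hmeas.mono_measure (Measure.restrict_mono Set.Icc_subset_Ici_self le_rfl))
    rw [ae_restrict_iff' measurableSet_Icc]
    apply ae_of_all
    intro t ht
    have htB : B ≤ t := ht.1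
    rw [Real.norm_of_nonneg (Real.rpow_nonneg (hFnn t htB) _)]
    rcases eq_or_lt_of_le htB with he | hlt
    · rw [← he]
      simp [hF B, intervalIntegral.integral_same, Real.zero_rpow hne]
    · have hpos : 0 < f B * (t - B) := mul_pos (hfpos B le_rfl) (by linarith)
      calc F t ^ (-(1 : ℝ) / p) ≤ (f B * (t - B)) ^ (-(1 : ℝ) / p) :=
            Real.rpow_le_rpow_of_nonpos hpos (hFlb1 t htB) hneg.le
        _ = f B ^ (-(1 : ℝ) / p) * (t - B) ^ (-(1 : ℝ) / p) :=
            Real.mul_rpow (hfpos B le_rfl).le (by linarith)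
  · -- at infinity
    have hexp : (p' + 1) * (-(1 : ℝ) / p) < -1 := by
      have h1 : (p' + 1) * (-(1 : ℝ) / p) = -((p' + 1) / p) := by ring
      rw [h1, show (-1 : ℝ) = -(1 : ℝ) by norm_num, neg_lt_neg_iff, lt_div_iff₀ hp0]
      linarith
    have hg2 : IntegrableOn
        (fun t => c2 ^ (-(1 : ℝ) / p) * t ^ ((p' + 1) * (-(1 : ℝ) / p)))
        (Set.Ioi (2 * u0)) :=
      (integrableOn_Ioi_rpow_of_lt hexp (by positivity)).const_mul _
    apply Integrable.mono' hg2
      (hmeas.mono_measure (Measure.restrict_mono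
        (fun x hx => le_trans hBt1 (le_of_lt hx)) le_rfl))
    rw [ae_restrict_iff' measurableSet_Ioi]
    apply ae_of_all
    intro t ht
    have ht' : 2 * u0 < t := ht
    have ht0 : 0 < t := by linarith
    have htB : B ≤ t := by linarith
    have h1 := hFlb2 t ht'.le
    have h2 : 0 < c2 * t ^ (p' + 1) := mul_pos hc2pos (Real.rpow_pos_of_pos ht0 _)
    rw [Real.norm_of_nonneg (Real.rpow_nonneg (hFnn t htB) _)]
    calc F t ^ (-(1 : ℝ) / p) ≤ (c2 * t ^ (p' + 1)) ^ (-(1 : ℝ) / p) :=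
          Real.rpow_le_rpow_of_nonpos h2 h1 hneg.le
      _ = c2 ^ (-(1 : ℝ) / p) * t ^ ((p' + 1) * (-(1 : ℝ) / p)) := by
          rw [Real.mul_rpow hc2pos.le (Real.rpow_nonneg ht0.le _),
            Real.rpow_mul ht0.le]
end

section
/- Under the standing assumptions (f ∈ NRV_{σ+1}, σ > p - 2, 1 < p), let F(t) = ∫_B^t f(s) ds and 𝓕(t) = ((p-1)/p)^{1/p} ∫_t^∞ F(x)^{-1/p} dx. Then lim_{t→∞} t 𝓕'(t)/𝓕(t) = -(σ + 2)/p + 1, i.e., 𝓕 is regularly varying at infinity with index 1 - (σ+2)/p. -/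
open Filter MeasureTheory Real

private lemma aux_alg1 (p a b ft tt : ℝ) (hb : b ≠ 0) (hp : p ≠ 0) :
    1 * a + tt * (ft * (-(1:ℝ)/p) * (a / b)) = a * (1 - (tt * ft / b)/p) := by
  field_simp
  ring

private lemma aux_alg2 (p a r : ℝ) (ha : a ≠ 0) (hp : 0 < p) (hr : p < r) :
    p / (r - p) = -a / (a * (1 - r/p)) := by
  have hp' : p ≠ 0 := hp.ne'
  have h3 : r - p ≠ 0 := sub_ne_zero.2 (ne_of_gt hr)
  have h4 : a * (1 - r/p) ≠ 0 := by
    apply mul_ne_zero ha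
    have h5 : 1 < r/p := (one_lt_div hp).2 hr
    exact ne_of_lt (by linarith)
  rw [div_eq_div_iff h3 h4]
  field_simp
  ring

private lemma aux_alg3 (c₀ a Φv tt : ℝ) (hc : c₀ ≠ 0) (hΦ : Φv ≠ 0) :
    -(tt * a / Φv) = tt * (c₀ * -a) / (c₀ * Φv) := by
  field_simp

set_option maxHeartbeats 2000000 in
theorem tail_integral_regular_variation
    (B A₀ p σ : ℝ) (hB : 0 < B) (hA : 0 < A₀) (hp : 1 < p) (hσ : p - 2 < σ)
    (φ : ℝ → ℝ) (hφcont : ContinuousOn φ (Set.Ici B))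
    (hφlim : Tendsto φ atTop (nhds 0))
    (f : ℝ → ℝ)
    (hf : ∀ u, B ≤ u → f u = A₀ * u ^ (σ + 1) * Real.exp (∫ t in B..u, φ t / t))
    (F : ℝ → ℝ) (hF : ∀ t, F t = ∫ s in B..t, f s)
    (𝓕 : ℝ → ℝ)
    (h𝓕 : ∀ t, 𝓕 t = ((p - 1) / p) ^ ((1:ℝ)/p) * ∫ x in Set.Ioi t, F x ^ (-(1:ℝ)/p)) :
    Tendsto (fun t => t * deriv 𝓕 t / 𝓕 t) atTop (nhds (-(σ + 2) / p + 1)) := by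
  have hp0 : (0:ℝ) < p := by linarith
  -- continuity of ψ = φ/t
  have hψ : ContinuousOn (fun t => φ t / t) (Set.Ici B) :=
    hφcont.div continuousOn_id (fun x hx => ne_of_gt (lt_of_lt_of_le hB hx))
  -- interval integrability of functions continuous on [B,∞)
  have hci : ∀ (g : ℝ → ℝ), ContinuousOn g (Set.Ici B) → ∀ a b : ℝ, B ≤ a → B ≤ b →
      IntervalIntegrable g MeasureTheory.volume a b := by
    intro g hg a b ha hb
    apply (hg.mono ?_).intervalIntegrable
    intro x hx
    have := Set.mem_uIcc.1 hx
    rcases this with h | h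
    · exact le_trans ha h.1
    · exact le_trans hb h.1
  -- continuity of primitives
  have hprim : ∀ (g : ℝ → ℝ), ContinuousOn g (Set.Ici B) →
      ContinuousOn (fun u => ∫ t in B..u, g t) (Set.Ici B) := by
    intro g hg x hx
    have hx' : B ≤ x := hx
    have hle : B ≤ x + 1 := by linarith
    have hmem : x ∈ Set.uIcc B (x+1) := by
      rw [Set.uIcc_of_le hle]; exact ⟨hx', by linarith⟩
    have hsub : Set.uIcc B (x+1) ⊆ Set.Ici B := by
      rw [Set.uIcc_of_le hle]; exact Set.Icc_subset_Ici_self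
    have h1 : ContinuousOn (fun u => ∫ t in B..u, g t) (Set.uIcc B (x+1)) :=
      intervalIntegral.continuousOn_primitive_interval
        ((hg.mono hsub).integrableOn_compact isCompact_uIcc)
    have h2 := h1 x hmem
    apply h2.mono_of_mem_nhdsWithin
    rw [Set.uIcc_of_le hle]
    have h3 : Set.Iic (x+1) ∈ nhdsWithin x (Set.Ici B) :=
      mem_nhdsWithin_of_mem_nhds (Iic_mem_nhds (by linarith))
    have h4 := Filter.inter_mem self_mem_nhdsWithin h3
    simpa [Set.Ici_inter_Iic] using h4
  -- continuity of f
  have hfc : ContinuousOn f (Set.Ici B) := by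
    apply ContinuousOn.congr ?_ (fun u hu => hf u hu)
    exact (continuousOn_const.mul (ContinuousOn.rpow_const continuousOn_id
      (fun x hx => Or.inl (ne_of_gt (lt_of_lt_of_le hB hx))))).mul
      (Real.continuous_exp.comp_continuousOn (hprim _ hψ))
  -- positivity of f
  have hfpos : ∀ u, B ≤ u → 0 < f u := by
    intro u hu
    have hu0 : 0 < u := lt_of_lt_of_le hB hu
    rw [hf u hu]
    positivity
  -- F basic facts
  have hFc : ContinuousOn F (Set.Ici B) := (hprim f hfc).congr (fun t _ => hF t)
  have hFdd : ∀ t, B < t → HasDerivAt F (f t) t := by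
    intro t ht
    have h1 : HasDerivAt (fun u => ∫ s in B..u, f s) (f t) t := by
      refine intervalIntegral.integral_hasDerivAt_right (hci f hfc B t le_rfl ht.le) ?_ ?_
      · exact ContinuousOn.stronglyMeasurableAtFilter isOpen_Ioi
          (hfc.mono Set.Ioi_subset_Ici_self) t ht
      · exact (hfc t ht.le).continuousAt (Ici_mem_nhds ht)
    exact h1.congr_of_eventuallyEq (Filter.Eventually.of_forall hF)
  have hFdiffInt : ∀ T t : ℝ, B ≤ T → T ≤ t → F t - F T = ∫ u in T..t, f u := by
    intro T t hT ht
    rw [hF, hF]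
    have := intervalIntegral.integral_add_adjacent_intervals
      (hci f hfc B T le_rfl hT) (hci f hfc T t hT (hT.trans ht))
    linarith
  have hFpos : ∀ t, B < t → 0 < F t := by
    intro t ht
    rw [hF t]
    exact intervalIntegral.intervalIntegral_pos_of_pos_on (hci f hfc B t le_rfl ht.le)
      (fun x hx => hfpos x hx.1.le) ht
  -- derivative of f
  have hfd : ∀ u, B < u → HasDerivAt f (f u * ((σ+1) + φ u) / u) u := by
    intro u hu
    have hu0 : 0 < u := hB.trans hu
    have hG : HasDerivAt (fun x => ∫ t in B..x, φ t / t) (φ u / u) u := by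
      refine intervalIntegral.integral_hasDerivAt_right (hci _ hψ B u le_rfl hu.le) ?_ ?_
      · exact ContinuousOn.stronglyMeasurableAtFilter isOpen_Ioi
          (hψ.mono Set.Ioi_subset_Ici_self) u hu
      · exact (hψ u hu.le).continuousAt (Ici_mem_nhds hu)
    have h1 : HasDerivAt (fun x : ℝ => A₀ * x ^ (σ+1)) (A₀ * ((σ+1) * u ^ (σ+1-1))) u :=
      (Real.hasDerivAt_rpow_const (Or.inl hu0.ne')).const_mul A₀
    have h2 : HasDerivAt (fun x => Real.exp (∫ t in B..x, φ t / t))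
        (Real.exp (∫ t in B..u, φ t / t) * (φ u / u)) u := hG.exp
    have h3 := h1.mul h2
    have heq : f =ᶠ[nhds u] fun x => A₀ * x ^ (σ+1) * Real.exp (∫ t in B..x, φ t / t) := by
      filter_upwards [Ici_mem_nhds hu] with x hx using hf x hx
    have h4 := h3.congr_of_eventuallyEq heq
    refine h4.congr_deriv ?_
    rw [hf u hu.le, Real.rpow_sub_one hu0.ne']
    field_simp
  -- derivative of W = t f t - (σ+2) F t
  have hW : ∀ u, B < u → HasDerivAt (fun x => x * f x - (σ+2) * F x) (f u * φ u) u := by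
    intro u hu
    have hu0 : 0 < u := hB.trans hu
    have h1 := ((hasDerivAt_id u).mul (hfd u hu)).sub ((hFdd u hu).const_mul (σ+2))
    refine h1.congr_deriv ?_
    simp only [id]
    field_simp
    ring
  -- key identity
  have hkey : ∀ T t : ℝ, B < T → T ≤ t →
      t * f t - (σ+2) * F t - (T * f T - (σ+2) * F T) = ∫ u in T..t, f u * φ u := by
    intro T t hT ht
    have h1 : ∀ u ∈ Set.uIcc T t, HasDerivAt (fun x => x * f x - (σ+2) * F x) (f u * φ u) u := by
      intro u hu
      rw [Set.uIcc_of_le ht] at hu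
      exact hW u (lt_of_lt_of_le hT hu.1)
    have h2 := intervalIntegral.integral_eq_sub_of_hasDerivAt h1
      (hci (fun u => f u * φ u) (hfc.mul hφcont) T t hT.le (hT.le.trans ht))
    rw [h2]
  -- eventual smallness of φ
  have hphi_ev : ∀ ε : ℝ, 0 < ε → ∃ T, B + 1 ≤ T ∧ ∀ u, T ≤ u → |φ u| ≤ ε := by
    intro ε hε
    obtain ⟨N, hN⟩ := Metric.tendsto_atTop.1 hφlim ε hε
    refine ⟨max N (B+1), le_max_right _ _, fun u hu => ?_⟩
    have := hN u (le_trans (le_max_left _ _) hu)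
    rw [Real.dist_eq, sub_zero] at this
    exact this.le
  -- split of the G-integral
  have hGadd : ∀ T t : ℝ, B ≤ T → T ≤ t → (∫ s in B..t, φ s / s) =
      (∫ s in B..T, φ s / s) + ∫ s in T..t, φ s / s := by
    intro T t hT ht
    rw [intervalIntegral.integral_add_adjacent_intervals (hci _ hψ B T le_rfl hT)
      (hci _ hψ T t hT (hT.trans ht))]
  -- power lower bound for f
  have hflb : ∀ ε : ℝ, 0 < ε → ∀ T, B + 1 ≤ T → (∀ u, T ≤ u → |φ u| ≤ ε) →
      ∀ t, T ≤ t → A₀ * Real.exp (∫ s in B..T, φ s / s) * T ^ ε * t ^ (σ + 1 - ε) ≤ f t := by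
    intro ε hε T hT hφT t ht
    have hT0 : 0 < T := by linarith
    have ht0 : 0 < t := by linarith
    have hBT : B ≤ T := by linarith
    have hBt : B ≤ t := by linarith
    have hmono : ∫ s in T..t, -ε * s⁻¹ ≤ ∫ s in T..t, φ s / s := by
      apply intervalIntegral.integral_mono_on ht
      · exact ((continuousOn_const.mul (continuousOn_id.inv₀
          (fun x hx => by
            rw [Set.uIcc_of_le ht] at hx
            exact ne_of_gt (lt_of_lt_of_le hT0 hx.1)))).intervalIntegrable)
      · exact hci _ hψ T t hBT hBt
      · intro x hx
        have hx0 : 0 < x := lt_of_lt_of_le hT0 hx.1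
        have h1 : -ε ≤ φ x := (abs_le.1 (hφT x hx.1)).1
        rw [← div_eq_mul_inv]
        exact div_le_div_of_nonneg_right h1 hx0.le
    have hval : ∫ s in T..t, -ε * s⁻¹ = -ε * Real.log (t/T) := by
      rw [intervalIntegral.integral_const_mul, integral_inv]
      rw [Set.uIcc_of_le ht]
      intro h
      exact absurd h.1 (not_le.2 hT0)
    have hIlb : Real.log T * ε + Real.log t * (-ε) ≤ ∫ s in T..t, φ s / s := by
      have h2 : Real.log (t/T) = Real.log t - Real.log T := Real.log_div ht0.ne' hT0.ne'
      rw [hval, h2] at hmono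
      linarith [hmono]
    rw [hf t hBt, hGadd T t hBT ht, Real.exp_add]
    have e2 : t ^ (σ + 1 - ε) = t ^ (σ+1) * Real.exp (Real.log t * (-ε)) := by
      rw [← Real.rpow_def_of_pos ht0, ← Real.rpow_add ht0]
      ring_nf
    have e3 : T ^ ε = Real.exp (Real.log T * ε) := Real.rpow_def_of_pos hT0 ε
    rw [e2, e3]
    calc A₀ * Real.exp (∫ s in B..T, φ s / s) * Real.exp (Real.log T * ε) *
          (t ^ (σ+1) * Real.exp (Real.log t * (-ε)))
        = A₀ * t ^ (σ+1) * (Real.exp (∫ s in B..T, φ s / s) *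
            Real.exp (Real.log T * ε + Real.log t * (-ε))) := by
          rw [Real.exp_add]; ring
      _ ≤ A₀ * t ^ (σ+1) * (Real.exp (∫ s in B..T, φ s / s) *
            Real.exp (∫ s in T..t, φ s / s)) := by
          have hb : (0:ℝ) ≤ A₀ * t ^ (σ+1) := by positivity
          have he : Real.exp (Real.log T * ε + Real.log t * (-ε)) ≤
              Real.exp (∫ s in T..t, φ s / s) := Real.exp_le_exp.2 hIlb
          have := mul_le_mul_of_nonneg_left he (Real.exp_nonneg (∫ s in B..T, φ s / s))
          exact mul_le_mul_of_nonneg_left this hb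
  -- fixed small epsilon
  obtain ⟨ε₁, hε₁def, hε₁pos⟩ : ∃ ε₁ : ℝ, ε₁ = (σ + 2 - p)/2 ∧ 0 < ε₁ :=
    ⟨(σ + 2 - p)/2, rfl, by linarith⟩
  obtain ⟨q, hqdef, hq0, hqp⟩ : ∃ q : ℝ, q = σ + 2 - ε₁ ∧ 0 < q ∧ p < q :=
    ⟨σ + 2 - ε₁, rfl, by rw [hε₁def]; linarith, by rw [hε₁def]; linarith⟩
  obtain ⟨T₀, hT₀1, hT₀2⟩ := hphi_ev ε₁ hε₁pos
  have hT₀0 : 0 < T₀ := by linarith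
  obtain ⟨c, hcdef, hc⟩ : ∃ c : ℝ, c = A₀ * Real.exp (∫ s in B..T₀, φ s / s) * T₀ ^ ε₁ ∧ 0 < c :=
    ⟨_, rfl, by positivity⟩
  have hfl : ∀ t, T₀ ≤ t → c * t ^ (σ + 1 - ε₁) ≤ f t := by
    intro t ht
    rw [hcdef]
    exact hflb ε₁ hε₁pos T₀ hT₀1 hT₀2 t ht
  -- lower bound for F
  have hFl : ∀ t, T₀ ≤ t → F T₀ + (c/q) * (t ^ q - T₀ ^ q) ≤ F t := by
    intro t ht
    have hBT₀ : B ≤ T₀ := by linarith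
    have hBt : B ≤ t := by linarith
    have h1 : F t - F T₀ = ∫ u in T₀..t, f u := hFdiffInt T₀ t hBT₀ ht
    have hrint : IntervalIntegrable (fun u : ℝ => c * u ^ (σ + 1 - ε₁))
        MeasureTheory.volume T₀ t := by
      apply ContinuousOn.intervalIntegrable
      apply continuousOn_const.mul
      apply ContinuousOn.rpow_const continuousOn_id
      intro x hx
      rw [Set.uIcc_of_le ht] at hx
      exact Or.inl (ne_of_gt (lt_of_lt_of_le hT₀0 hx.1))
    have h2 : ∫ u in T₀..t, c * u ^ (σ + 1 - ε₁) ≤ ∫ u in T₀..t, f u :=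
      intervalIntegral.integral_mono_on ht hrint (hci f hfc T₀ t hBT₀ hBt)
        (fun x hx => hfl x hx.1)
    have h3 : ∫ u in T₀..t, c * u ^ (σ + 1 - ε₁) = c * ((t ^ q - T₀ ^ q)/q) := by
      rw [intervalIntegral.integral_const_mul,
        integral_rpow (Or.inl (by rw [hε₁def]; linarith : (-1:ℝ) < σ + 1 - ε₁))]
      have hexp : σ + 1 - ε₁ + 1 = q := by rw [hqdef]; ring
      rw [hexp]
    rw [h3] at h2
    have : c * ((t ^ q - T₀ ^ q)/q) = (c/q) * (t ^ q - T₀ ^ q) := by ring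
    linarith [h2, this ▸ h2]
  obtain ⟨c₂, hc₂def, hc₂⟩ : ∃ c₂ : ℝ, c₂ = c/(2*q) ∧ 0 < c₂ := ⟨_, rfl, by positivity⟩
  have hFLB : ∀ᶠ t in atTop, c₂ * t ^ q ≤ F t := by
    have htend : Tendsto (fun t : ℝ => c₂ * t ^ q) atTop atTop :=
      (tendsto_rpow_atTop hq0).const_mul_atTop hc₂
    filter_upwards [htend.eventually_ge_atTop ((c/q) * T₀ ^ q - F T₀),
      eventually_ge_atTop T₀] with t h1 h2
    have h3 := hFl t h2
    have h4 : (c/q) * t ^ q = 2 * (c₂ * t ^ q) := by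
      rw [hc₂def]; field_simp
    nlinarith [h1, h3, h4]
  have hFtop : Tendsto F atTop atTop :=
    tendsto_atTop_mono' atTop hFLB ((tendsto_rpow_atTop hq0).const_mul_atTop hc₂)
  -- the Karamata limit
  have hr : Tendsto (fun t => t * f t / F t) atTop (nhds (σ + 2)) := by
    rw [Metric.tendsto_atTop]
    intro ε hε
    obtain ⟨T, hT1, hT2⟩ := hphi_ev (ε/3) (by linarith)
    have hBT : B < T := by linarith
    obtain ⟨N₁, hN₁⟩ := eventually_atTop.1 (tendsto_atTop.1 hFtop
      (max 1 (|T * f T - (σ+2) * F T| / (ε/3))))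
    refine ⟨max T N₁, fun t ht => ?_⟩
    have htT : T ≤ t := le_trans (le_max_left _ _) ht
    have hBt : B < t := lt_of_lt_of_le hBT htT
    have hFt : 0 < F t := hFpos t hBt
    have hFge := hN₁ t (le_trans (le_max_right _ _) ht)
    have hFge1 : (1:ℝ) ≤ F t := le_trans (le_max_left _ _) hFge
    have hFge2 : |T * f T - (σ+2) * F T| / (ε/3) ≤ F t := le_trans (le_max_right _ _) hFge
    have hkey' := hkey T t hBT htT
    -- bound the integral of f φ
    have hint1 : IntervalIntegrable (fun u => f u * φ u) MeasureTheory.volume T t :=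
      hci _ (hfc.mul hφcont) T t hBT.le (hBT.le.trans htT)
    have habs : |∫ u in T..t, f u * φ u| ≤ (ε/3) * (F t - F T) := by
      calc |∫ u in T..t, f u * φ u| ≤ ∫ u in T..t, |f u * φ u| :=
            intervalIntegral.abs_integral_le_integral_abs htT
        _ ≤ ∫ u in T..t, (ε/3) * f u := by
            apply intervalIntegral.integral_mono_on htT hint1.abs
            · exact (hci f hfc T t hBT.le (hBT.le.trans htT)).const_mul _
            · intro x hx
              have hBx : B ≤ x := le_trans hBT.le hx.1
              rw [abs_mul, abs_of_nonneg (hfpos x hBx).le]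
              calc f x * |φ x| ≤ f x * (ε/3) :=
                    mul_le_mul_of_nonneg_left (hT2 x hx.1) (hfpos x hBx).le
                _ = (ε/3) * f x := by ring
        _ = (ε/3) * (F t - F T) := by
            rw [intervalIntegral.integral_const_mul, hFdiffInt T t hBT.le htT]
    have hFT : 0 < F T := hFpos T hBT
    have habs2 : |∫ u in T..t, f u * φ u| ≤ (ε/3) * F t := by
      have : (ε/3) * (F t - F T) ≤ (ε/3) * F t := by nlinarith
      linarith
    rw [Real.dist_eq]
    have heq : t * f t / F t - (σ+2) =
        ((T * f T - (σ+2) * F T) + ∫ u in T..t, f u * φ u) / F t := by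
      rw [← hkey']
      field_simp
      ring
    rw [heq, abs_div, abs_of_pos hFt]
    have hCle : |T * f T - (σ+2) * F T| ≤ (ε/3) * F t := by
      have h1 : |T * f T - (σ+2) * F T| ≤ F t * (ε/3) := by
        have := mul_le_mul_of_nonneg_right hFge2 (by linarith : (0:ℝ) ≤ ε/3)
        rwa [div_mul_cancel₀ _ (by linarith : (ε/3) ≠ 0)] at this
      linarith [h1]
    have hnum : |(T * f T - (σ+2) * F T) + ∫ u in T..t, f u * φ u| ≤ (2*ε/3) * F t :=
      le_trans (abs_add_le _ _) (by linarith)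
    calc |(T * f T - (σ+2) * F T) + ∫ u in T..t, f u * φ u| / F t
        ≤ ((2*ε/3) * F t) / F t := div_le_div_of_nonneg_right hnum hFt.le
      _ = 2*ε/3 := by field_simp
      _ < ε := by linarith
  -- choose T₂
  obtain ⟨T₂', hT₂'⟩ := eventually_atTop.1 hFLB
  obtain ⟨T₂, hT₂def⟩ : ∃ T₂ : ℝ, T₂ = max T₂' (max (B+1) 1) := ⟨_, rfl⟩
  have hT₂B : B + 1 ≤ T₂ := by rw [hT₂def]; exact le_trans (le_max_left _ _) (le_max_right _ _)
  have hT₂1 : (1:ℝ) ≤ T₂ := by rw [hT₂def]; exact le_trans (le_max_right _ _) (le_max_right _ _)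
  have hT₂0 : (0:ℝ) < T₂ := by linarith
  have hBT₂ : B < T₂ := by linarith
  have hFb : ∀ x, T₂ ≤ x → c₂ * x ^ q ≤ F x := by
    intro x hx
    exact hT₂' x (le_trans (by rw [hT₂def]; exact le_max_left _ _) hx)
  -- continuity of the integrand
  have hFpc : ContinuousOn (fun x => F x ^ (-(1:ℝ)/p)) (Set.Ioi B) :=
    ContinuousOn.rpow_const (hFc.mono Set.Ioi_subset_Ici_self)
      (fun x hx => Or.inl (hFpos x hx).ne')
  have hexpq : -(q/p) < -1 := by
    have : 1 < q/p := (one_lt_div hp0).2 hqp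
    linarith
  have hnegp : -(1:ℝ)/p ≤ 0 := by
    apply div_nonpos_of_nonpos_of_nonneg <;> linarith
  -- integrability of the tail
  have hIioInt : ∀ t, T₂ ≤ t → IntegrableOn (fun x => F x ^ (-(1:ℝ)/p)) (Set.Ioi t) := by
    intro t ht
    have ht0 : 0 < t := lt_of_lt_of_le hT₂0 ht
    have hBt : B < t := lt_of_lt_of_le hBT₂ ht
    have hbound : IntegrableOn (fun x => c₂ ^ (-(1:ℝ)/p) * x ^ (-(q/p))) (Set.Ioi t) :=
      (integrableOn_Ioi_rpow_of_lt hexpq ht0).const_mul _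
    apply Integrable.mono' hbound
    · exact (hFpc.mono (fun x hx => lt_trans hBt hx)).aestronglyMeasurable measurableSet_Ioi
    · rw [ae_restrict_iff' measurableSet_Ioi]
      refine MeasureTheory.ae_of_all _ fun x hx => ?_
      have hxt : t < x := hx
      have hx0 : 0 < x := lt_trans ht0 hxt
      have hxT₂ : T₂ ≤ x := le_trans ht hxt.le
      have hFx : c₂ * x ^ q ≤ F x := hFb x hxT₂
      have hFxpos : 0 < c₂ * x ^ q := by positivity
      have hFxp : 0 < F x := hFpos x (lt_trans hBt hxt)
      rw [Real.norm_eq_abs, abs_of_nonneg (Real.rpow_nonneg hFxp.le _)]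
      calc F x ^ (-(1:ℝ)/p) ≤ (c₂ * x ^ q) ^ (-(1:ℝ)/p) :=
            Real.rpow_le_rpow_of_nonpos hFxpos hFx hnegp
        _ = c₂ ^ (-(1:ℝ)/p) * x ^ (-(q/p)) := by
            rw [Real.mul_rpow hc₂.le (Real.rpow_nonneg hx0.le _), ← Real.rpow_mul hx0.le]
            congr 1
            field_simp
  -- splitting the tail integral
  have hsplit : ∀ t, T₂ ≤ t → (∫ x in Set.Ioi t, F x ^ (-(1:ℝ)/p)) =
      (∫ x in Set.Ioi T₂, F x ^ (-(1:ℝ)/p)) - ∫ x in T₂..t, F x ^ (-(1:ℝ)/p) := by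
    intro t ht
    have h1 : Set.Ioc T₂ t ∪ Set.Ioi t = Set.Ioi T₂ := Set.Ioc_union_Ioi_eq_Ioi ht
    have h2 := MeasureTheory.setIntegral_union (Set.Ioc_disjoint_Ioi le_rfl)
      measurableSet_Ioi ((hIioInt T₂ le_rfl).mono_set Set.Ioc_subset_Ioi_self)
      (hIioInt t ht) (f := fun x => F x ^ (-(1:ℝ)/p))
    rw [h1] at h2
    rw [intervalIntegral.integral_of_le ht]
    linarith
  -- derivative of the tail integral
  have hΦd : ∀ t, T₂ < t → HasDerivAt (fun u => ∫ x in Set.Ioi u, F x ^ (-(1:ℝ)/p))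
      (-(F t ^ (-(1:ℝ)/p))) t := by
    intro t ht
    have hBt : B < t := lt_trans hBT₂ ht
    have hftc : HasDerivAt (fun u => ∫ x in T₂..u, F x ^ (-(1:ℝ)/p)) (F t ^ (-(1:ℝ)/p)) t := by
      refine intervalIntegral.integral_hasDerivAt_right ((hFpc.mono ?_).intervalIntegrable)
        (ContinuousOn.stronglyMeasurableAtFilter isOpen_Ioi hFpc t hBt)
        ((hFpc t hBt).continuousAt (Ioi_mem_nhds hBt))
      rw [Set.uIcc_of_le ht.le]
      intro x hx
      exact lt_of_lt_of_le hBT₂ hx.1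
    have h1 : HasDerivAt (fun u => (∫ x in Set.Ioi T₂, F x ^ (-(1:ℝ)/p)) -
        ∫ x in T₂..u, F x ^ (-(1:ℝ)/p)) (-(F t ^ (-(1:ℝ)/p))) t := by
      have := (hasDerivAt_const t (∫ x in Set.Ioi T₂, F x ^ (-(1:ℝ)/p))).sub hftc
      exact this.congr_deriv (by simp)
    apply h1.congr_of_eventuallyEq
    filter_upwards [Ioi_mem_nhds ht] with x hx using hsplit x (le_of_lt hx)
  -- the tail integral tends to 0
  have hΦ0 : Tendsto (fun t => ∫ x in Set.Ioi t, F x ^ (-(1:ℝ)/p)) atTop (nhds 0) := by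
    have h1 : Tendsto (fun t => ∫ x in T₂..t, F x ^ (-(1:ℝ)/p)) atTop
        (nhds (∫ x in Set.Ioi T₂, F x ^ (-(1:ℝ)/p))) :=
      MeasureTheory.intervalIntegral_tendsto_integral_Ioi (μ := MeasureTheory.volume)
        (f := fun x => F x ^ (-(1:ℝ)/p)) T₂ (hIioInt T₂ le_rfl) tendsto_id
    have h2 : Tendsto (fun t => (∫ x in Set.Ioi T₂, F x ^ (-(1:ℝ)/p)) -
        ∫ x in T₂..t, F x ^ (-(1:ℝ)/p)) atTop (nhds ((∫ x in Set.Ioi T₂, F x ^ (-(1:ℝ)/p)) -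
        ∫ x in Set.Ioi T₂, F x ^ (-(1:ℝ)/p))) := tendsto_const_nhds.sub h1
    rw [sub_self] at h2
    exact Tendsto.congr' (by filter_upwards [eventually_ge_atTop T₂] with t ht
      using (hsplit t ht).symm) h2
  -- the tail integral is positive
  have hΦpos : ∀ t, T₂ ≤ t → 0 < ∫ x in Set.Ioi t, F x ^ (-(1:ℝ)/p) := by
    intro t ht
    have hBt : B < t := lt_of_lt_of_le hBT₂ ht
    have h1 : Set.Ioc t (t+1) ∪ Set.Ioi (t+1) = Set.Ioi t :=
      Set.Ioc_union_Ioi_eq_Ioi (by linarith)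
    have h2 := MeasureTheory.setIntegral_union (Set.Ioc_disjoint_Ioi le_rfl)
      measurableSet_Ioi ((hIioInt t ht).mono_set Set.Ioc_subset_Ioi_self)
      (hIioInt (t+1) (by linarith)) (f := fun x => F x ^ (-(1:ℝ)/p))
    rw [h1] at h2
    rw [h2]
    have hpos1 : 0 < ∫ x in Set.Ioc t (t+1), F x ^ (-(1:ℝ)/p) := by
      rw [← intervalIntegral.integral_of_le (by linarith : t ≤ t+1)]
      apply intervalIntegral.intervalIntegral_pos_of_pos_on
      · apply (hFpc.mono ?_).intervalIntegrable
        rw [Set.uIcc_of_le (by linarith : t ≤ t+1)]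
        intro x hx
        exact lt_of_lt_of_le hBt hx.1
      · intro x hx
        exact Real.rpow_pos_of_pos (hFpos x (lt_trans hBt hx.1)) _
      · linarith
    have hpos2 : 0 ≤ ∫ x in Set.Ioi (t+1), F x ^ (-(1:ℝ)/p) :=
      MeasureTheory.setIntegral_nonneg measurableSet_Ioi
        (fun x hx => Real.rpow_nonneg (hFpos x (by simp at hx; linarith)).le _)
    linarith
  -- t * F t ^ (-1/p) tends to 0
  have hD0 : Tendsto (fun t => t * F t ^ (-(1:ℝ)/p)) atTop (nhds 0) := by
    have hqp1 : 0 < q/p - 1 := by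
      have : 1 < q/p := (one_lt_div hp0).2 hqp
      linarith
    have hlim : Tendsto (fun t : ℝ => c₂ ^ (-(1:ℝ)/p) * t ^ (1 - q/p)) atTop (nhds 0) := by
      have h1 := (tendsto_rpow_neg_atTop hqp1).const_mul (c₂ ^ (-(1:ℝ)/p))
      rw [mul_zero] at h1
      refine h1.congr (fun t => ?_)
      rw [neg_sub]
    apply squeeze_zero' ?_ ?_ hlim
    · filter_upwards [eventually_ge_atTop T₂] with t ht
      have hBt : B < t := lt_of_lt_of_le hBT₂ ht
      exact mul_nonneg (by linarith) (Real.rpow_nonneg (hFpos t hBt).le _)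
    · filter_upwards [eventually_ge_atTop T₂] with t ht
      have ht0 : 0 < t := lt_of_lt_of_le hT₂0 ht
      have hFx : c₂ * t ^ q ≤ F t := hFb t ht
      have hFxpos : 0 < c₂ * t ^ q := by positivity
      calc t * F t ^ (-(1:ℝ)/p) ≤ t * (c₂ * t ^ q) ^ (-(1:ℝ)/p) :=
            mul_le_mul_of_nonneg_left
              (Real.rpow_le_rpow_of_nonpos hFxpos hFx hnegp) ht0.le
        _ = c₂ ^ (-(1:ℝ)/p) * t ^ (1 - q/p) := by
            rw [Real.mul_rpow hc₂.le (Real.rpow_nonneg ht0.le _), ← Real.rpow_mul ht0.le]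
            rw [show q * (-(1:ℝ)/p) = -(q/p) by field_simp]
            rw [show (1 - q/p) = 1 + (-(q/p)) by ring, Real.rpow_add ht0, Real.rpow_one]
            ring
  -- derivative of D t = t * F t ^ (-1/p)
  have hDd : ∀ t, B < t → HasDerivAt (fun x => x * F x ^ (-(1:ℝ)/p))
      (1 * F t ^ (-(1:ℝ)/p) + t * (f t * (-(1:ℝ)/p) * F t ^ (-(1:ℝ)/p - 1))) t := by
    intro t ht
    exact (hasDerivAt_id t).mul ((hFdd t ht).rpow_const (Or.inl (hFpos t ht).ne'))
  have hrgt : ∀ᶠ t in atTop, p < t * f t / F t :=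
    hr.eventually (eventually_gt_nhds (by linarith : p < σ + 2))
  have hg'eq : ∀ t, B < t →
      1 * F t ^ (-(1:ℝ)/p) + t * (f t * (-(1:ℝ)/p) * F t ^ (-(1:ℝ)/p - 1))
      = F t ^ (-(1:ℝ)/p) * (1 - (t * f t / F t)/p) := by
    intro t ht
    have hFt := hFpos t ht
    rw [Real.rpow_sub_one hFt.ne']
    exact aux_alg1 p _ _ _ _ hFt.ne' (by linarith)
  -- L'Hopital
  have hlhop : Tendsto (fun t => (∫ x in Set.Ioi t, F x ^ (-(1:ℝ)/p)) /
      (t * F t ^ (-(1:ℝ)/p))) atTop (nhds (p/(σ + 2 - p))) := by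
    apply HasDerivAt.lhopital_zero_atTop
      (f' := fun t => -(F t ^ (-(1:ℝ)/p)))
      (g' := fun t => 1 * F t ^ (-(1:ℝ)/p) + t * (f t * (-(1:ℝ)/p) * F t ^ (-(1:ℝ)/p - 1)))
    · filter_upwards [eventually_gt_atTop T₂] with t ht using hΦd t ht
    · filter_upwards [eventually_gt_atTop T₂] with t ht using hDd t (lt_trans hBT₂ ht)
    · filter_upwards [eventually_gt_atTop T₂, hrgt] with t ht hrt
      have hBt := lt_trans hBT₂ ht
      rw [hg'eq t hBt]
      have hFt := hFpos t hBt
      have h1 : 0 < F t ^ (-(1:ℝ)/p) := Real.rpow_pos_of_pos hFt _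
      have h2 : 1 - (t * f t / F t)/p < 0 := by
        have : 1 < (t * f t / F t)/p := (one_lt_div hp0).2 hrt
        linarith
      exact ne_of_lt (mul_neg_of_pos_of_neg h1 h2)
    · exact hΦ0
    · exact hD0
    · have hbase : Tendsto (fun t => p / (t * f t / F t - p)) atTop
          (nhds (p/(σ + 2 - p))) :=
        tendsto_const_nhds.div (hr.sub tendsto_const_nhds)
          (by intro h; apply absurd h; exact ne_of_gt (by linarith))
      apply Tendsto.congr' ?_ hbase
      filter_upwards [eventually_gt_atTop T₂, hrgt] with t ht hrt
      have hBt := lt_trans hBT₂ ht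
      have hFt := hFpos t hBt
      rw [hg'eq t hBt]
      exact aux_alg2 p _ _ (Real.rpow_pos_of_pos hFt _).ne' hp0 hrt
  -- invert the limit
  have hLne : p/(σ + 2 - p) ≠ 0 := div_ne_zero (by linarith) (by linarith)
  have hinv := hlhop.inv₀ hLne
  rw [inv_div] at hinv
  have hfin1 : Tendsto (fun t => t * F t ^ (-(1:ℝ)/p) /
      (∫ x in Set.Ioi t, F x ^ (-(1:ℝ)/p))) atTop (nhds ((σ + 2 - p)/p)) := by
    refine hinv.congr (fun t => ?_)
    rw [inv_div]
  have hfin2 := hfin1.neg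
  have hc₀ : 0 < ((p - 1) / p : ℝ) ^ ((1:ℝ)/p) :=
    Real.rpow_pos_of_pos (div_pos (by linarith) hp0) _
  have heqf : (fun t => -(t * F t ^ (-(1:ℝ)/p) / (∫ x in Set.Ioi t, F x ^ (-(1:ℝ)/p))))
      =ᶠ[atTop] (fun t => t * deriv 𝓕 t / 𝓕 t) := by
    filter_upwards [eventually_gt_atTop T₂] with t ht
    have h𝓕d : HasDerivAt 𝓕 (((p - 1) / p) ^ ((1:ℝ)/p) * -(F t ^ (-(1:ℝ)/p))) t := by
      have h0 := (hΦd t ht).const_mul (((p - 1) / p) ^ ((1:ℝ)/p))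
      exact h0.congr_of_eventuallyEq (Filter.Eventually.of_forall h𝓕)
    rw [h𝓕d.deriv, h𝓕 t]
    have hΦt := hΦpos t ht.le
    exact aux_alg3 _ _ _ _ hc₀.ne' hΦt.ne'
  have hfinal := Tendsto.congr' heqf hfin2
  have hvals : -((σ + 2 - p)/p) = -(σ + 2)/p + 1 := by
    field_simp
    ring
  rw [← hvals]
  exact hfinal
end

section
/- Let f(u) = A_0 u^{σ+1} exp(∫_B^u φ(t)/t dt) with φ ∈ C^1[B, ∞), φ(t) → 0, and suppose t φ'(t)/φ(t) → -α as t → ∞ for some α with (σ+2)/p - 1 < α < σ + 2. Then for every a > 0, lim_{t→∞} [ f(at)/(a^{p-1} f(t)) - a^{σ+2-p} ] / 𝓕(t) = 0, where 𝓕(t) = ((p-1)/p)^{1/p} ∫_t^∞ F(x)^{-1/p} dx and F(t) = ∫_B^t f(s) ds. -/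
open Filter MeasureTheory Real

set_option maxHeartbeats 1000000 in
theorem f_scaling_rate_limit
    (B A₀ p σ α : ℝ) (hB : 0 < B) (hA : 0 < A₀) (hp : 1 < p) (hσ : p - 2 < σ)
    (hα₁ : (σ + 2) / p - 1 < α) (hα₂ : α < σ + 2)
    (φ : ℝ → ℝ) (hφC1 : ContDiffOn ℝ 1 φ (Set.Ici B))
    (hφlim : Tendsto φ atTop (nhds 0))
    (hφ' : Tendsto (fun t => t * deriv φ t / φ t) atTop (nhds (-α)))
    (f : ℝ → ℝ)
    (hf : ∀ u, B ≤ u → f u = A₀ * u ^ (σ + 1) * Real.exp (∫ t in B..u, φ t / t))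
    (F : ℝ → ℝ) (hF : ∀ t, F t = ∫ s in B..t, f s)
    (𝓕 : ℝ → ℝ)
    (h𝓕 : ∀ t, 𝓕 t = ((p - 1) / p) ^ ((1:ℝ)/p) * ∫ x in Set.Ioi t, F x ^ (-(1:ℝ)/p)) :
    ∀ a : ℝ, 0 < a →
      Tendsto (fun t => (f (a * t) / (a ^ (p - 1) * f t) - a ^ (σ + 2 - p)) / 𝓕 t)
        atTop (nhds 0) := by
  intro a ha
  have hp0 : (0:ℝ) < p := by linarith
  -- choice of ε
  obtain ⟨ε, hε, hε1, hε2⟩ : ∃ ε, 0 < ε ∧ ε < σ + 2 - p ∧ (σ + 2 + ε) / p - 1 < α - ε := by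
    set δ : ℝ := α + 1 - (σ + 2) / p with hδdef
    have hδ : 0 < δ := by simp only [hδdef]; linarith
    have h1 : 0 < σ + 2 - p := by linarith
    have h2 : 0 < δ * p / (p + 1) := by positivity
    have hpp : (0:ℝ) < p + 1 := by linarith
    refine ⟨min (σ + 2 - p) (δ * p / (p + 1)) / 2, div_pos (lt_min h1 h2) two_pos, ?_, ?_⟩
    · have := min_le_left (σ + 2 - p) (δ * p / (p + 1))
      have := lt_min h1 h2
      linarith
    · set ε := min (σ + 2 - p) (δ * p / (p + 1)) / 2 with hεdef
      have h3 : ε ≤ δ * p / (p + 1) / 2 := by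
        have := min_le_right (σ + 2 - p) (δ * p / (p + 1))
        simp only [hεdef]; linarith
      have hδε : ε * (p + 1) ≤ δ * p / 2 := by
        have h4 := mul_le_mul_of_nonneg_right h3 hpp.le
        have heq : δ * p / (p + 1) / 2 * (p + 1) = δ * p / 2 := by field_simp
        linarith
      have hδp : δ * p = (α + 1) * p - (σ + 2) := by
        simp only [hδdef]; field_simp
      have hδppos : 0 < δ * p := mul_pos hδ hp0
      clear hεdef h3 h2
      clear_value ε
      clear hδdef hδ
      clear_value δ
      rw [sub_lt_iff_lt_add, div_lt_iff₀ hp0]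
      nlinarith
  set β : ℝ := α - ε with hβdef
  set γ : ℝ := (σ + 2 + ε) / p - 1 with hγdef
  have hγpos : 0 < γ := by
    simp only [hγdef]
    rw [lt_sub_iff_add_lt, lt_div_iff₀ hp0]
    linarith
  have hβγ : γ < β := hε2
  have hβpos : 0 < β := lt_trans hγpos hβγ
  have hq1 : p < σ + 2 - ε := by linarith
  -- infrastructure
  have hφcont : ContinuousOn φ (Set.Ici B) := hφC1.continuousOn
  have hgcont : ContinuousOn (fun t => φ t / t) (Set.Ici B) :=
    hφcont.div continuousOn_id (fun t ht => ne_of_gt (lt_of_lt_of_le hB ht))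
  have huIcc : ∀ u v : ℝ, B ≤ u → B ≤ v → Set.uIcc u v ⊆ Set.Ici B :=
    fun u v hu hv x hx => le_trans (le_min hu hv) hx.1
  have hgint : ∀ u v, B ≤ u → B ≤ v → IntervalIntegrable (fun t => φ t / t) volume u v :=
    fun u v hu hv => (hgcont.mono (huIcc u v hu hv)).intervalIntegrable
  set P : ℝ → ℝ := fun u => ∫ t in B..u, φ t / t with hPdef
  have hPcont : ContinuousOn P (Set.Ici B) := by
    intro u hu
    have h1 : ContinuousWithinAt P (Set.Icc B (u + 1)) u := by
      apply intervalIntegral.continuousWithinAt_primitive (measure_singleton u)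
      rw [min_self]
      exact hgint B (max B (u + 1)) le_rfl (le_max_left _ _)
    apply h1.mono_of_mem_nhdsWithin
    refine Filter.mem_of_superset
      (inter_mem_nhdsWithin _ (Iic_mem_nhds (by linarith [hu.out] : u < u + 1)))
      (fun x hx => ⟨hx.1, hx.2⟩)
  have hfcont : ContinuousOn f (Set.Ici B) := by
    have hc : ContinuousOn (fun u => A₀ * u ^ (σ + 1) * Real.exp (P u)) (Set.Ici B) := by
      refine ContinuousOn.mul (ContinuousOn.mul continuousOn_const ?_)
        (Real.continuous_exp.comp_continuousOn hPcont)
      exact fun x hx => (Real.continuousAt_rpow_const x _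
        (Or.inl (ne_of_gt (lt_of_lt_of_le hB hx.out)))).continuousWithinAt
    exact hc.congr (fun u hu => hf u hu.out)
  have hfpos : ∀ u, B ≤ u → 0 < f u := by
    intro u hu
    have hu0 : 0 < u := lt_of_lt_of_le hB hu
    rw [hf u hu]
    positivity
  have hfint : ∀ u v, B ≤ u → B ≤ v → IntervalIntegrable f volume u v :=
    fun u v hu hv => (hfcont.mono (huIcc u v hu hv)).intervalIntegrable
  have hFcont : ContinuousOn F (Set.Ici B) := by
    have hFeq : F = fun t => ∫ s in B..t, f s := funext hF
    rw [hFeq]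
    intro u hu
    have h1 : ContinuousWithinAt (fun t => ∫ s in B..t, f s) (Set.Icc B (u + 1)) u := by
      apply intervalIntegral.continuousWithinAt_primitive (measure_singleton u)
      rw [min_self]
      exact hfint B (max B (u + 1)) le_rfl (le_max_left _ _)
    apply h1.mono_of_mem_nhdsWithin
    refine Filter.mem_of_superset
      (inter_mem_nhdsWithin _ (Iic_mem_nhds (by linarith [hu.out] : u < u + 1)))
      (fun x hx => ⟨hx.1, hx.2⟩)
  have hFpos : ∀ x, B < x → 0 < F x := by
    intro x hx
    rw [hF x]
    apply intervalIntegral.intervalIntegral_pos_of_pos_on (hfint B x le_rfl hx.le)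
      (fun s hs => hfpos s hs.1.le) hx
  -- Lemma A : decay of φ
  obtain ⟨K, hKpos, T₁, hT₁B, hT₁1, hφdecay⟩ :
      ∃ K, 0 < K ∧ ∃ T₁, B < T₁ ∧ 1 ≤ T₁ ∧ ∀ t, T₁ ≤ t → |φ t| ≤ K * t ^ (-β) := by
    have hev : ∀ᶠ t in atTop, |t * deriv φ t / φ t - (-α)| < ε := by
      have := Metric.tendsto_nhds.mp hφ' ε hε
      simpa [Real.dist_eq] using this
    obtain ⟨T₀, hT₀⟩ := eventually_atTop.mp (hev.and (eventually_ge_atTop (max (B + 1) 1)))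
    set T₁ := max T₀ (max (B + 1) 1) with hT₁def
    have hT₁B : B < T₁ := by
      have : B + 1 ≤ T₁ := le_trans (le_max_left _ _) (le_max_right _ _)
      linarith
    have hT₁1 : 1 ≤ T₁ := le_trans (le_max_right _ _) (le_max_right _ _)
    have hbig : ∀ t, T₁ ≤ t → |t * deriv φ t / φ t + α| < ε := by
      intro t ht
      have := (hT₀ t (le_trans (le_max_left _ _) ht)).1
      simpa [sub_neg_eq_add] using this
    have hTle : ∀ t, T₁ ≤ t → B < t ∧ 0 < t := fun t ht =>
      ⟨lt_of_lt_of_le hT₁B ht, lt_of_lt_of_le zero_lt_one (le_trans hT₁1 ht)⟩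
    have hφne : ∀ t, T₁ ≤ t → φ t ≠ 0 := by
      intro t ht h0
      have h1 := hbig t ht
      rw [h0, div_zero, zero_add, abs_of_pos (by linarith : (0:ℝ) < α)] at h1
      linarith
    have hquot : ∀ t, T₁ ≤ t → t * deriv φ t / φ t ≤ -β := by
      intro t ht
      have h1 := (abs_lt.mp (hbig t ht)).2
      simp only [hβdef]; linarith
    have hφdiff : ∀ t, B < t → HasDerivAt φ (deriv φ t) t := fun t ht =>
      ((hφC1.differentiableOn one_ne_zero).differentiableAt (Ici_mem_nhds ht)).hasDerivAt
    set W : ℝ → ℝ := fun t => (φ t) ^ 2 * t ^ (2 * β) with hWdef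
    have hW : ∀ x, T₁ < x → HasDerivAt W
        (2 * φ x * deriv φ x * x ^ (2 * β) + (φ x) ^ 2 * (2 * β * x ^ (2 * β - 1))) x := by
      intro x hx
      have hx0 : 0 < x := by linarith [(hTle x hx.le).2]
      have h1 : HasDerivAt (fun t => (φ t) ^ 2) (2 * φ x * deriv φ x) x := by
        have := (hφdiff x (hTle x hx.le).1).fun_pow 2
        simpa [mul_comm, mul_assoc, mul_left_comm] using this
      have h2 : HasDerivAt (fun t : ℝ => t ^ (2 * β)) (2 * β * x ^ (2 * β - 1)) x :=
        Real.hasDerivAt_rpow_const (Or.inl hx0.ne')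
      exact h1.mul h2
    have hWanti : AntitoneOn W (Set.Ici T₁) := by
      apply antitoneOn_of_deriv_nonpos (convex_Ici T₁)
      · apply ContinuousOn.mul
        · exact ((hφcont.mono (Set.Ici_subset_Ici.mpr hT₁B.le)).pow 2)
        · exact fun x hx => (Real.continuousAt_rpow_const x _
            (Or.inl (ne_of_gt (hTle x hx.out).2))).continuousWithinAt
      · intro x hx
        rw [interior_Ici] at hx
        exact (hW x hx).differentiableAt.differentiableWithinAt
      · intro x hx
        rw [interior_Ici] at hx
        rw [(hW x hx).deriv]
        have hx0 : 0 < x := (hTle x hx.le).2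
        have hcne : φ x ≠ 0 := hφne x hx.le
        have hq := hquot x hx.le
        have h5 : φ x * (x * deriv φ x + β * φ x) ≤ 0 := by
          have h6 : φ x * (x * deriv φ x + β * φ x)
              = (φ x) ^ 2 * (x * deriv φ x / φ x + β) := by field_simp
          rw [h6]
          exact mul_nonpos_of_nonneg_of_nonpos (sq_nonneg _) (by linarith)
        have h7 : (0:ℝ) < x ^ (2 * β) := Real.rpow_pos_of_pos hx0 _
        have h8 : 2 * φ x * deriv φ x * x ^ (2 * β) + (φ x) ^ 2 * (2 * β * x ^ (2 * β - 1))
            = (x ^ (2 * β) / x) * (2 * (φ x * (x * deriv φ x + β * φ x))) := by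
          rw [Real.rpow_sub_one hx0.ne']
          field_simp
        rw [h8]
        exact mul_nonpos_of_nonneg_of_nonpos (by positivity) (by linarith)
    refine ⟨|φ T₁| * T₁ ^ β + 1, by positivity, T₁, hT₁B, hT₁1, ?_⟩
    intro t ht
    have ht0 : 0 < t := (hTle t ht).2
    have hWle : W t ≤ W T₁ := hWanti Set.self_mem_Ici ht ht
    have hsq : (|φ t| * t ^ β) ^ 2 ≤ (|φ T₁| * T₁ ^ β) ^ 2 := by
      have e1 : ∀ s : ℝ, 0 < s → (|φ s| * s ^ β) ^ 2 = (φ s) ^ 2 * s ^ (2 * β) := by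
        intro s hs
        rw [mul_pow, sq_abs, ← Real.rpow_natCast (s ^ β) 2, ← Real.rpow_mul hs.le]
        norm_num [mul_comm]
      rw [e1 t ht0, e1 T₁ (lt_of_lt_of_le zero_lt_one hT₁1)]
      exact hWle
    have habs : |φ t| * t ^ β ≤ |φ T₁| * T₁ ^ β := by
      have h9 := Real.sqrt_le_sqrt hsq
      rwa [Real.sqrt_sq (by positivity), Real.sqrt_sq (by positivity)] at h9
    have hrp : (0:ℝ) < t ^ (-β) := Real.rpow_pos_of_pos ht0 _
    have : |φ t| = (|φ t| * t ^ β) * t ^ (-β) := by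
      rw [mul_assoc, ← Real.rpow_add ht0]
      simp
    rw [this]
    have : (|φ t| * t ^ β) * t ^ (-β) ≤ (|φ T₁| * T₁ ^ β) * t ^ (-β) :=
      mul_le_mul_of_nonneg_right habs hrp.le
    nlinarith
  -- Lemma B : power bounds for f
  obtain ⟨T₂, hT₂T₁, hT₂1, hT₂B, hφsmall⟩ :
      ∃ T₂ : ℝ, T₁ ≤ T₂ ∧ 1 ≤ T₂ ∧ B < T₂ ∧ ∀ t, T₂ ≤ t → |φ t| ≤ ε := by
    have h1 : ∀ᶠ t in atTop, |φ t| < ε := by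
      have := Metric.tendsto_nhds.mp hφlim ε hε
      simpa [Real.dist_eq] using this
    obtain ⟨T, hT⟩ := eventually_atTop.mp (h1.and (eventually_ge_atTop T₁))
    refine ⟨max T T₁, le_max_right _ _, le_trans hT₁1 (le_max_right _ _),
      lt_of_lt_of_le hT₁B (le_max_right _ _), fun t ht => ?_⟩
    exact ((hT t (le_trans (le_max_left _ _) ht)).1).le
  have hT₂0 : (0:ℝ) < T₂ := lt_of_lt_of_le zero_lt_one hT₂1
  have hIbound : ∀ u, T₂ ≤ u → |∫ t in T₂..u, φ t / t| ≤ ε * (Real.log u - Real.log T₂) := by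
    intro u hu
    have hu0 : 0 < u := lt_of_lt_of_le hT₂0 hu
    have hBu : B ≤ u := le_trans hT₂B.le hu
    have h2 : |∫ t in T₂..u, φ t / t| ≤ ∫ t in T₂..u, |φ t / t| :=
      intervalIntegral.abs_integral_le_integral_abs hu
    have h3 : IntervalIntegrable (fun t => ε * (1 / t)) volume T₂ u := by
      apply ContinuousOn.intervalIntegrable
      refine continuousOn_const.mul (continuousOn_const.div continuousOn_id ?_)
      intro x hx
      exact ne_of_gt (lt_of_lt_of_le hB (huIcc T₂ u hT₂B.le hBu hx))
    have h4 : ∫ t in T₂..u, |φ t / t| ≤ ∫ t in T₂..u, ε * (1 / t) := by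
      apply intervalIntegral.integral_mono_on hu ((hgint T₂ u hT₂B.le hBu).abs) h3
      intro x hx
      have hx0 : 0 < x := lt_of_lt_of_le hT₂0 hx.1
      rw [abs_div, abs_of_pos hx0, mul_one_div]
      exact div_le_div_of_nonneg_right (hφsmall x hx.1) hx0.le
    have h5 : ∫ t in T₂..u, ε * (1 / t) = ε * (Real.log u - Real.log T₂) := by
      rw [intervalIntegral.integral_const_mul, integral_one_div, Real.log_div hu0.ne' hT₂0.ne']
      rw [Set.uIcc_of_le hu]
      rintro ⟨h0, h1⟩
      linarith
    linarith
  have hPT₂ : (∫ t in B..T₂, φ t / t) = P T₂ := rfl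
  set cU := Real.exp (P T₂ - ε * Real.log T₂) with hcUdef
  set cL := Real.exp (P T₂ + ε * Real.log T₂) with hcLdef
  have hcU : 0 < cU := Real.exp_pos _
  have hcL : 0 < cL := Real.exp_pos _
  have hPsplit : ∀ u, T₂ ≤ u → P u = P T₂ + ∫ t in T₂..u, φ t / t := by
    intro u hu
    exact (intervalIntegral.integral_add_adjacent_intervals
      (hgint B T₂ le_rfl hT₂B.le) (hgint T₂ u hT₂B.le (le_trans hT₂B.le hu))).symm
  have hfub : ∀ u, T₂ ≤ u → f u ≤ A₀ * cU * u ^ (σ + 1 + ε) := by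
    intro u hu
    have hu0 : 0 < u := lt_of_lt_of_le hT₂0 hu
    have hBu : B ≤ u := le_trans hT₂B.le hu
    have h1 := (abs_le.mp (hIbound u hu)).2
    have hPu : P u ≤ P T₂ - ε * Real.log T₂ + ε * Real.log u := by
      rw [hPsplit u hu]; linarith
    have hexp : Real.exp (P u) ≤ cU * u ^ ε := by
      have he : cU * u ^ ε = Real.exp (P T₂ - ε * Real.log T₂ + ε * Real.log u) := by
        rw [Real.exp_add, hcUdef, Real.rpow_def_of_pos hu0, mul_comm ε (Real.log u)]
      rw [he]
      exact Real.exp_le_exp.mpr hPu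
    have hfu : f u = A₀ * u ^ (σ + 1) * Real.exp (P u) := hf u hBu
    rw [hfu]
    calc A₀ * u ^ (σ + 1) * Real.exp (P u) ≤ A₀ * u ^ (σ + 1) * (cU * u ^ ε) := by
          apply mul_le_mul_of_nonneg_left hexp (by positivity)
      _ = A₀ * cU * u ^ (σ + 1 + ε) := by rw [show σ + 1 + ε = (σ + 1) + ε by ring, Real.rpow_add hu0 (σ + 1) ε]; ring
  have hflb : ∀ u, T₂ ≤ u → A₀ * cL * u ^ (σ + 1 - ε) ≤ f u := by
    intro u hu
    have hu0 : 0 < u := lt_of_lt_of_le hT₂0 hu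
    have hBu : B ≤ u := le_trans hT₂B.le hu
    have h1 := (abs_le.mp (hIbound u hu)).1
    have hlogu : Real.log T₂ ≤ Real.log u := Real.log_le_log hT₂0 hu
    have hPu : P T₂ + ε * Real.log T₂ - ε * Real.log u ≤ P u := by
      rw [hPsplit u hu]; linarith
    have hexp : cL * u ^ (-ε) ≤ Real.exp (P u) := by
      have he : cL * u ^ (-ε) = Real.exp (P T₂ + ε * Real.log T₂ + -ε * Real.log u) := by
        rw [Real.exp_add, hcLdef, Real.rpow_def_of_pos hu0, mul_comm (-ε) (Real.log u)]
      rw [he]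
      apply Real.exp_le_exp.mpr
      linarith
    have hfu : f u = A₀ * u ^ (σ + 1) * Real.exp (P u) := hf u hBu
    rw [hfu]
    calc A₀ * cL * u ^ (σ + 1 - ε) = A₀ * u ^ (σ + 1) * (cL * u ^ (-ε)) := by
          rw [show σ + 1 - ε = (σ + 1) + -ε by ring, Real.rpow_add hu0 (σ + 1) (-ε)]; ring
      _ ≤ A₀ * u ^ (σ + 1) * Real.exp (P u) := by
          apply mul_le_mul_of_nonneg_left hexp (by positivity)
  -- Lemma C : power bounds for F
  have hq2pos : (0:ℝ) < σ + 2 + ε := by linarith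
  have hq1pos : (0:ℝ) < σ + 2 - ε := by linarith
  set D := ∫ s in B..T₂, f s with hDdef
  have hFsplit : ∀ x, T₂ ≤ x → F x = D + ∫ s in T₂..x, f s := by
    intro x hx
    rw [hF x]
    exact (intervalIntegral.integral_add_adjacent_intervals
      (hfint B T₂ le_rfl hT₂B.le) (hfint T₂ x hT₂B.le (le_trans hT₂B.le hx))).symm
  have hDnn : 0 ≤ D := intervalIntegral.integral_nonneg hT₂B.le (fun u hu => (hfpos u hu.1).le)
  set K₂ := D + A₀ * cU / (σ + 2 + ε) with hK₂def
  have hK₂pos : 0 < K₂ := by positivity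
  have hFub : ∀ x, T₂ ≤ x → F x ≤ K₂ * x ^ (σ + 2 + ε) := by
    intro x hx
    have hx0 : 0 < x := lt_of_lt_of_le hT₂0 hx
    have hx1 : (1:ℝ) ≤ x := le_trans hT₂1 hx
    have hBx : B ≤ x := le_trans hT₂B.le hx
    have hint2 : IntervalIntegrable (fun s : ℝ => A₀ * cU * s ^ (σ + 1 + ε)) volume T₂ x := by
      apply ContinuousOn.intervalIntegrable
      refine continuousOn_const.mul (fun s hs => ?_)
      have hs0 : 0 < s := lt_of_lt_of_le hB (huIcc T₂ x hT₂B.le hBx hs)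
      exact (Real.continuousAt_rpow_const s _ (Or.inl hs0.ne')).continuousWithinAt
    have h1 : (∫ s in T₂..x, f s) ≤ ∫ s in T₂..x, A₀ * cU * s ^ (σ + 1 + ε) :=
      intervalIntegral.integral_mono_on hx (hfint T₂ x hT₂B.le hBx) hint2
        (fun s hs => hfub s hs.1)
    have h2 : ∫ s in T₂..x, A₀ * cU * s ^ (σ + 1 + ε)
        = A₀ * cU * ((x ^ (σ + 2 + ε) - T₂ ^ (σ + 2 + ε)) / (σ + 2 + ε)) := by
      rw [intervalIntegral.integral_const_mul,
        integral_rpow (Or.inl (by linarith : (-1:ℝ) < σ + 1 + ε)),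
        show σ + 1 + ε + 1 = σ + 2 + ε by ring]
    have hxq1 : (1:ℝ) ≤ x ^ (σ + 2 + ε) := Real.one_le_rpow hx1 hq2pos.le
    have hT2p : 0 < T₂ ^ (σ + 2 + ε) := Real.rpow_pos_of_pos hT₂0 _
    have h3 : A₀ * cU * ((x ^ (σ + 2 + ε) - T₂ ^ (σ + 2 + ε)) / (σ + 2 + ε))
        ≤ A₀ * cU / (σ + 2 + ε) * x ^ (σ + 2 + ε) := by
      rw [show A₀ * cU * ((x ^ (σ + 2 + ε) - T₂ ^ (σ + 2 + ε)) / (σ + 2 + ε))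
        = A₀ * cU / (σ + 2 + ε) * (x ^ (σ + 2 + ε) - T₂ ^ (σ + 2 + ε)) by ring]
      apply mul_le_mul_of_nonneg_left _ (by positivity)
      linarith
    have h4 : D ≤ D * x ^ (σ + 2 + ε) := by
      calc D = D * 1 := (mul_one D).symm
        _ ≤ D * x ^ (σ + 2 + ε) := mul_le_mul_of_nonneg_left hxq1 hDnn
    calc F x = D + ∫ s in T₂..x, f s := hFsplit x hx
      _ ≤ D * x ^ (σ + 2 + ε) + A₀ * cU / (σ + 2 + ε) * x ^ (σ + 2 + ε) := by linarith
      _ = K₂ * x ^ (σ + 2 + ε) := by rw [hK₂def]; ring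
  set K₁ := A₀ * cL / (2 * (σ + 2 - ε)) with hK₁def
  have hK₁pos : 0 < K₁ := by positivity
  set T₃ := max T₂ ((2 * T₂ ^ (σ + 2 - ε)) ^ (σ + 2 - ε)⁻¹) with hT₃def
  have hT₃T₂ : T₂ ≤ T₃ := le_max_left _ _
  have hFlb : ∀ x, T₃ ≤ x → K₁ * x ^ (σ + 2 - ε) ≤ F x := by
    intro x hx
    have hxT₂ : T₂ ≤ x := le_trans hT₃T₂ hx
    have hx0 : 0 < x := lt_of_lt_of_le hT₂0 hxT₂
    have hBx : B ≤ x := le_trans hT₂B.le hxT₂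
    have hxq : 2 * T₂ ^ (σ + 2 - ε) ≤ x ^ (σ + 2 - ε) := by
      have h0 : (0:ℝ) ≤ 2 * T₂ ^ (σ + 2 - ε) := by positivity
      have h1 : (2 * T₂ ^ (σ + 2 - ε)) ^ (σ + 2 - ε)⁻¹ ≤ x := le_trans (le_max_right _ _) hx
      have h2 := Real.rpow_le_rpow (by positivity) h1 hq1pos.le
      rwa [Real.rpow_inv_rpow h0 hq1pos.ne'] at h2
    have hint2 : IntervalIntegrable (fun s : ℝ => A₀ * cL * s ^ (σ + 1 - ε)) volume T₂ x := by
      apply ContinuousOn.intervalIntegrable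
      refine continuousOn_const.mul (fun s hs => ?_)
      have hs0 : 0 < s := lt_of_lt_of_le hB (huIcc T₂ x hT₂B.le hBx hs)
      exact (Real.continuousAt_rpow_const s _ (Or.inl hs0.ne')).continuousWithinAt
    have h1 : (∫ s in T₂..x, A₀ * cL * s ^ (σ + 1 - ε)) ≤ ∫ s in T₂..x, f s :=
      intervalIntegral.integral_mono_on hxT₂ hint2 (hfint T₂ x hT₂B.le hBx)
        (fun s hs => hflb s hs.1)
    have h2 : ∫ s in T₂..x, A₀ * cL * s ^ (σ + 1 - ε)
        = A₀ * cL * ((x ^ (σ + 2 - ε) - T₂ ^ (σ + 2 - ε)) / (σ + 2 - ε)) := by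
      rw [intervalIntegral.integral_const_mul,
        integral_rpow (Or.inl (by linarith : (-1:ℝ) < σ + 1 - ε)),
        show σ + 1 - ε + 1 = σ + 2 - ε by ring]
    have h3 : K₁ * x ^ (σ + 2 - ε)
        ≤ A₀ * cL * ((x ^ (σ + 2 - ε) - T₂ ^ (σ + 2 - ε)) / (σ + 2 - ε)) := by
      rw [hK₁def, show A₀ * cL * ((x ^ (σ + 2 - ε) - T₂ ^ (σ + 2 - ε)) / (σ + 2 - ε))
        = A₀ * cL / (σ + 2 - ε) * (x ^ (σ + 2 - ε) - T₂ ^ (σ + 2 - ε)) by ring,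
        show A₀ * cL / (2 * (σ + 2 - ε)) * x ^ (σ + 2 - ε)
        = A₀ * cL / (σ + 2 - ε) * (x ^ (σ + 2 - ε) / 2) by field_simp]
      apply mul_le_mul_of_nonneg_left _ (by positivity)
      linarith
    rw [hFsplit x hxT₂]
    linarith
  -- Lemma D : lower bound for 𝓕
  have hT₃0 : (0:ℝ) < T₃ := lt_of_lt_of_le hT₂0 hT₃T₂
  have hT₃B : B < T₃ := lt_of_lt_of_le hT₂B hT₃T₂
  have he1 : (σ + 2 - ε) * (-1 / p) < -1 := by
    rw [show (σ + 2 - ε) * (-1 / p) = -((σ + 2 - ε) / p) by ring, neg_lt_neg_iff,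
      lt_div_iff₀ hp0]
    linarith
  have he2 : (σ + 2 + ε) * (-1 / p) < -1 := by
    rw [show (σ + 2 + ε) * (-1 / p) = -((σ + 2 + ε) / p) by ring, neg_lt_neg_iff,
      lt_div_iff₀ hp0]
    linarith
  have hFint : ∀ t, T₃ ≤ t → IntegrableOn (fun x => F x ^ (-(1:ℝ) / p)) (Set.Ioi t) := by
    intro t ht
    have ht0 : 0 < t := lt_of_lt_of_le hT₃0 ht
    have hcont : ContinuousOn (fun x => F x ^ (-(1:ℝ) / p)) (Set.Ici t) := by
      apply ContinuousOn.rpow_const (hFcont.mono (Set.Ici_subset_Ici.mpr (le_trans hT₃B.le ht)))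
      intro x hx
      exact Or.inl (ne_of_gt (hFpos x (lt_of_lt_of_le (lt_of_lt_of_le hT₃B ht) hx.out)))
    have haesm : AEStronglyMeasurable (fun x => F x ^ (-(1:ℝ) / p))
        (volume.restrict (Set.Ioi t)) :=
      (hcont.mono Set.Ioi_subset_Ici_self).aestronglyMeasurable measurableSet_Ioi
    have hgint2 : IntegrableOn (fun x : ℝ => K₁ ^ (-(1:ℝ) / p) * x ^ ((σ + 2 - ε) * (-1 / p)))
        (Set.Ioi t) := (integrableOn_Ioi_rpow_of_lt he1 ht0).const_mul _
    apply Integrable.mono' hgint2 haesm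
    rw [ae_restrict_iff' measurableSet_Ioi]
    apply ae_of_all
    intro x hx
    have hxt : t < x := hx
    have hxT₃ : T₃ ≤ x := le_trans ht hxt.le
    have hx0 : 0 < x := lt_of_lt_of_le hT₃0 hxT₃
    have hFx : 0 < F x := hFpos x (lt_of_lt_of_le hT₃B hxT₃)
    have hlow : K₁ * x ^ (σ + 2 - ε) ≤ F x := hFlb x hxT₃
    have h1 : F x ^ (-(1:ℝ) / p) ≤ (K₁ * x ^ (σ + 2 - ε)) ^ (-(1:ℝ) / p) := by
      apply Real.rpow_le_rpow_of_nonpos (by positivity) hlow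
      rw [neg_div]
      exact neg_nonpos.mpr (by positivity)
    rw [Real.norm_eq_abs, abs_of_pos (Real.rpow_pos_of_pos hFx _)]
    calc F x ^ (-(1:ℝ) / p) ≤ (K₁ * x ^ (σ + 2 - ε)) ^ (-(1:ℝ) / p) := h1
      _ = K₁ ^ (-(1:ℝ) / p) * x ^ ((σ + 2 - ε) * (-1 / p)) := by
          rw [Real.mul_rpow hK₁pos.le (by positivity), ← Real.rpow_mul hx0.le]
  set Cp : ℝ := ((p - 1) / p) ^ ((1:ℝ) / p) with hCpdef
  have hCp : 0 < Cp := Real.rpow_pos_of_pos (div_pos (by linarith) hp0) _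
  set c₅ : ℝ := Cp * (K₂ ^ (-(1:ℝ) / p) / γ) with hc₅def
  have hc₅ : 0 < c₅ := by
    apply mul_pos hCp
    exact div_pos (Real.rpow_pos_of_pos hK₂pos _) hγpos
  have h𝓕lb : ∀ t, T₃ ≤ t → c₅ * t ^ (-γ) ≤ 𝓕 t := by
    intro t ht
    have ht0 : 0 < t := lt_of_lt_of_le hT₃0 ht
    have hgint2 : IntegrableOn (fun x : ℝ => K₂ ^ (-(1:ℝ) / p) * x ^ ((σ + 2 + ε) * (-1 / p)))
        (Set.Ioi t) := (integrableOn_Ioi_rpow_of_lt he2 ht0).const_mul _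
    have hmono : (∫ x in Set.Ioi t, K₂ ^ (-(1:ℝ) / p) * x ^ ((σ + 2 + ε) * (-1 / p)))
        ≤ ∫ x in Set.Ioi t, F x ^ (-(1:ℝ) / p) := by
      apply setIntegral_mono_on hgint2 (hFint t ht) measurableSet_Ioi
      intro x hx
      have hxT₃ : T₃ ≤ x := le_trans ht (le_of_lt hx)
      have hx0 : 0 < x := lt_of_lt_of_le hT₃0 hxT₃
      have hFx : 0 < F x := hFpos x (lt_of_lt_of_le hT₃B hxT₃)
      have hup : F x ≤ K₂ * x ^ (σ + 2 + ε) := hFub x (le_trans hT₃T₂ hxT₃)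
      have h1 : (K₂ * x ^ (σ + 2 + ε)) ^ (-(1:ℝ) / p) ≤ F x ^ (-(1:ℝ) / p) := by
        apply Real.rpow_le_rpow_of_nonpos hFx hup
        rw [neg_div]
        exact neg_nonpos.mpr (by positivity)
      calc K₂ ^ (-(1:ℝ) / p) * x ^ ((σ + 2 + ε) * (-1 / p))
          = (K₂ * x ^ (σ + 2 + ε)) ^ (-(1:ℝ) / p) := by
            rw [Real.mul_rpow hK₂pos.le (by positivity), ← Real.rpow_mul hx0.le]
        _ ≤ F x ^ (-(1:ℝ) / p) := h1
    have hval : (∫ x in Set.Ioi t, K₂ ^ (-(1:ℝ) / p) * x ^ ((σ + 2 + ε) * (-1 / p)))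
        = K₂ ^ (-(1:ℝ) / p) * (t ^ (-γ) / γ) := by
      rw [MeasureTheory.integral_const_mul, integral_Ioi_rpow_of_lt he2 ht0]
      rw [show (σ + 2 + ε) * (-1 / p) + 1 = -γ by rw [hγdef]; field_simp; ring]
      rw [show -t ^ (-γ) / -γ = t ^ (-γ) / γ by rw [neg_div_neg_eq]]
    rw [h𝓕 t]
    calc c₅ * t ^ (-γ) = Cp * (K₂ ^ (-(1:ℝ) / p) * (t ^ (-γ) / γ)) := by
          rw [hc₅def]; ring
      _ ≤ Cp * ∫ x in Set.Ioi t, F x ^ (-(1:ℝ) / p) := by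
          apply mul_le_mul_of_nonneg_left _ hCp.le
          rw [← hval]
          exact hmono
  -- Lemma E : the scaling identity and final squeeze
  set m : ℝ := min 1 a with hmdef
  have hm : 0 < m := lt_min zero_lt_one ha
  have hm1 : m ≤ 1 := min_le_left _ _
  have hma : m ≤ a := min_le_right _ _
  set T₅ : ℝ := max T₃ (T₁ / m) with hT₅def
  have hT₅T₃ : T₃ ≤ T₅ := le_max_left _ _
  have hT₅0 : 0 < T₅ := lt_of_lt_of_le hT₃0 hT₅T₃
  set I : ℝ → ℝ := fun t => ∫ s in t..(a * t), φ s / s with hIdef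
  set K₃ : ℝ := K * m ^ (-β) * (|a - 1| / m) with hK₃def
  have hK₃nn : 0 ≤ K₃ := by positivity
  have hfacts : ∀ t, T₅ ≤ t → 0 < t ∧ B ≤ t ∧ B ≤ a * t ∧ T₁ ≤ m * t ∧ m * t ≤ a * t ∧ m * t ≤ t := by
    intro t ht
    have ht0 : 0 < t := lt_of_lt_of_le hT₅0 ht
    have hmt : T₁ ≤ m * t := by
      have h1 : T₁ / m ≤ t := le_trans (le_max_right _ _) ht
      rw [div_le_iff₀ hm] at h1
      linarith [h1]
    have hBt : B ≤ t := le_trans hT₃B.le (le_trans hT₅T₃ ht)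
    have hmat : m * t ≤ a * t := mul_le_mul_of_nonneg_right hma ht0.le
    have hBat : B ≤ a * t := le_trans hT₁B.le (le_trans hmt hmat)
    exact ⟨ht0, hBt, hBat, hmt, hmat, mul_le_mul_of_nonneg_right hm1 ht0.le |>.trans_eq (one_mul t)⟩
  have hE1 : ∀ t, T₅ ≤ t →
      f (a * t) / (a ^ (p - 1) * f t) - a ^ (σ + 2 - p)
        = a ^ (σ + 2 - p) * (Real.exp (I t) - 1) := by
    intro t ht
    obtain ⟨ht0, hBt, hBat, hmt, hmat, hmtt⟩ := hfacts t ht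
    have hPat : (∫ s in B..(a * t), φ s / s)
        = (∫ s in B..t, φ s / s) + I t :=
      (intervalIntegral.integral_add_adjacent_intervals
        (hgint B t le_rfl hBt) (hgint t (a * t) hBt hBat)).symm
    rw [hf (a * t) hBat, hf t hBt, hPat, Real.mul_rpow ha.le ht0.le, Real.exp_add]
    have key : a ^ (σ + 1) = a ^ (σ + 2 - p) * a ^ (p - 1) := by
      rw [← Real.rpow_add ha, show σ + 2 - p + (p - 1) = σ + 1 by ring]
    rw [key]
    have h1 : (0:ℝ) < a ^ (p - 1) := Real.rpow_pos_of_pos ha _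
    have h2 : (0:ℝ) < t ^ (σ + 1) := Real.rpow_pos_of_pos ht0 _
    have h3 : (0:ℝ) < Real.exp (∫ s in B..t, φ s / s) := Real.exp_pos _
    field_simp
  have hE2 : ∀ t, T₅ ≤ t → |I t| ≤ K₃ * t ^ (-β) := by
    intro t ht
    obtain ⟨ht0, hBt, hBat, hmt, hmat, hmtt⟩ := hfacts t ht
    have hmt0 : 0 < m * t := mul_pos hm ht0
    have hbd : ∀ x ∈ Set.uIoc t (a * t), ‖φ x / x‖ ≤ K * (m * t) ^ (-β) / (m * t) := by
      intro x hx
      have hxlb : m * t ≤ x := by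
        rcases Set.mem_uIoc.mp hx with h | h
        · exact le_trans hmtt h.1.le
        · exact le_trans hmat h.1.le
      have hx0 : 0 < x := lt_of_lt_of_le hmt0 hxlb
      have hxT₁ : T₁ ≤ x := le_trans hmt hxlb
      have h1 : |φ x| ≤ K * x ^ (-β) := hφdecay x hxT₁
      have h2 : x ^ (-β) ≤ (m * t) ^ (-β) :=
        Real.rpow_le_rpow_of_nonpos hmt0 hxlb (neg_nonpos.mpr hβpos.le)
      rw [Real.norm_eq_abs, abs_div, abs_of_pos hx0]
      calc |φ x| / x ≤ K * (m * t) ^ (-β) / x := by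
            apply div_le_div_of_nonneg_right _ hx0.le
            exact le_trans h1 (mul_le_mul_of_nonneg_left h2 hKpos.le)
        _ ≤ K * (m * t) ^ (-β) / (m * t) := by
            apply div_le_div_of_nonneg_left (by positivity) hmt0 hxlb
    have h3 := intervalIntegral.norm_integral_le_of_norm_le_const hbd
    rw [Real.norm_eq_abs] at h3
    have h4 : |a * t - t| = |a - 1| * t := by
      rw [show a * t - t = (a - 1) * t by ring, abs_mul, abs_of_pos ht0]
    rw [h4] at h3
    calc |I t| ≤ K * (m * t) ^ (-β) / (m * t) * (|a - 1| * t) := h3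
      _ = K₃ * t ^ (-β) := by
          rw [hK₃def, Real.mul_rpow hm.le ht0.le]
          field_simp
  -- final squeeze
  have h𝓕pos : ∀ t, T₅ ≤ t → 0 < 𝓕 t := by
    intro t ht
    have ht0 : 0 < t := lt_of_lt_of_le hT₅0 ht
    exact lt_of_lt_of_le (by positivity) (h𝓕lb t (le_trans hT₅T₃ ht))
  have hev1 : ∀ᶠ t in atTop, K₃ * t ^ (-β) ≤ 1 := by
    have htd : Tendsto (fun t : ℝ => K₃ * t ^ (-β)) atTop (nhds 0) := by
      simpa using (tendsto_rpow_neg_atTop hβpos).const_mul K₃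
    exact (htd.eventually_lt_const zero_lt_one).mono (fun x hx => hx.le)
  apply squeeze_zero_norm' (a := fun t => 2 * a ^ (σ + 2 - p) * K₃ / c₅ * t ^ (γ - β))
  · filter_upwards [eventually_ge_atTop T₅, hev1] with t ht h1
    obtain ⟨ht0, hBt, hBat, hmt, hmat, hmtt⟩ := hfacts t ht
    have hIbd : |I t| ≤ K₃ * t ^ (-β) := hE2 t ht
    have hIle1 : |I t| ≤ 1 := le_trans hIbd h1
    have hexp : |Real.exp (I t) - 1| ≤ 2 * (K₃ * t ^ (-β)) := by
      calc |Real.exp (I t) - 1| ≤ 2 * |I t| := Real.abs_exp_sub_one_le hIle1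
        _ ≤ 2 * (K₃ * t ^ (-β)) := by linarith
    have h𝓕t : 0 < 𝓕 t := h𝓕pos t ht
    have h𝓕l : c₅ * t ^ (-γ) ≤ 𝓕 t := h𝓕lb t (le_trans hT₅T₃ ht)
    have hap : (0:ℝ) < a ^ (σ + 2 - p) := Real.rpow_pos_of_pos ha _
    rw [Real.norm_eq_abs, abs_div, abs_of_pos h𝓕t, hE1 t ht, abs_mul, abs_of_pos hap]
    have hnum : a ^ (σ + 2 - p) * |Real.exp (I t) - 1|
        ≤ 2 * a ^ (σ + 2 - p) * K₃ * t ^ (-β) := by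
      calc a ^ (σ + 2 - p) * |Real.exp (I t) - 1|
          ≤ a ^ (σ + 2 - p) * (2 * (K₃ * t ^ (-β))) :=
            mul_le_mul_of_nonneg_left hexp hap.le
        _ = 2 * a ^ (σ + 2 - p) * K₃ * t ^ (-β) := by ring
    calc a ^ (σ + 2 - p) * |Real.exp (I t) - 1| / 𝓕 t
        ≤ 2 * a ^ (σ + 2 - p) * K₃ * t ^ (-β) / (c₅ * t ^ (-γ)) := by
          apply div_le_div₀ (by positivity) hnum (by positivity) h𝓕l
      _ = 2 * a ^ (σ + 2 - p) * K₃ / c₅ * t ^ (γ - β) := by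
          rw [show γ - β = -β - -γ by ring, Real.rpow_sub ht0]
          field_simp
  · have : Tendsto (fun t : ℝ => t ^ (γ - β)) atTop (nhds 0) := by
      rw [show γ - β = -(β - γ) by ring]
      exact tendsto_rpow_neg_atTop (by linarith)
    simpa using this.const_mul (2 * a ^ (σ + 2 - p) * K₃ / c₅)
end

section
/- Under the assumptions that φ ∈ C^1[B,∞), φ(t) → 0 as t → ∞, and t φ'(t)/φ(t) → -α with α > 0, one has for every fixed a > 0: lim_{t→∞} ∫_1^a φ(tx)/(x φ(t)) dx = (1 - a^{-α})/α. -/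
open Filter MeasureTheory Real

/-- Helper: if `ψ → l` at infinity and `u ↦ ψ u / u` is eventually interval integrable on
`[t, a*t]`, then `∫_t^{at} ψ(u)/u du → l * log a`. -/
lemma aux_tendsto_int {ψ : ℝ → ℝ} {a m l : ℝ} (hm : 0 < m) (hm1 : m ≤ 1) (hma : m ≤ a)
    (hψ : Tendsto ψ atTop (nhds l))
    (hint : ∀ᶠ t in atTop, IntervalIntegrable (fun u => ψ u / u) volume t (a * t)) :
    Tendsto (fun t => ∫ u in t..(a * t), ψ u / u) atTop (nhds (l * Real.log a)) := by
  rw [Metric.tendsto_atTop]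
  intro ε hε
  have hX : 0 ≤ |a - 1| / m := by positivity
  set δ := ε / (|a - 1| / m + 1) with hδdef
  have hδpos : 0 < δ := div_pos hε (by linarith)
  have hev : ∀ᶠ u in atTop, |ψ u - l| < δ := by
    have := Metric.tendsto_nhds.mp hψ δ hδpos
    simpa [Real.dist_eq] using this
  obtain ⟨T₂, hT₂⟩ := eventually_atTop.mp hev
  obtain ⟨T₃, hT₃⟩ := eventually_atTop.mp hint
  refine ⟨max (max (T₂ / m) 1) T₃, fun t ht => ?_⟩
  have ht3 : T₃ ≤ t := le_trans (le_max_right _ _) ht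
  have ht1 : (1 : ℝ) ≤ t := le_trans (le_trans (le_max_right _ _) (le_max_left _ _)) ht
  have htpos : (0 : ℝ) < t := lt_of_lt_of_le one_pos ht1
  have htm : T₂ ≤ m * t := by
    have h : T₂ / m ≤ t := le_trans (le_trans (le_max_left _ _) (le_max_left _ _)) ht
    have : T₂ = m * (T₂ / m) := by field_simp
    rw [this]
    nlinarith
  have hmt : 0 < m * t := mul_pos hm htpos
  have hmin : m * t ≤ min t (a * t) := by
    refine le_min (by nlinarith) (by nlinarith)
  have hlow : ∀ u ∈ Set.uIoc t (a * t), m * t ≤ u := fun u hu =>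
    le_of_lt (lt_of_le_of_lt hmin hu.1)
  have hlowIcc : ∀ u ∈ Set.uIcc t (a * t), m * t ≤ u := fun u hu =>
    le_trans hmin hu.1
  have hne : ∀ u ∈ Set.uIcc t (a * t), u ≠ 0 := fun u hu =>
    ne_of_gt (lt_of_lt_of_le hmt (hlowIcc u hu))
  have hint2 : IntervalIntegrable (fun u => l / u) volume t (a * t) :=
    (continuousOn_const.div continuousOn_id hne).intervalIntegrable
  have heq : (∫ u in t..(a * t), l / u) = l * Real.log a := by
    have h0 : (0 : ℝ) ∉ Set.uIcc t (a * t) := fun h0 => by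
      have := hlowIcc 0 h0; linarith
    simp only [div_eq_mul_one_div l]
    rw [intervalIntegral.integral_const_mul, integral_one_div h0,
      mul_div_assoc, div_self htpos.ne', mul_one]
  have hsub : (∫ u in t..(a * t), ψ u / u) - l * Real.log a
      = ∫ u in t..(a * t), (ψ u - l) / u := by
    rw [← heq, ← intervalIntegral.integral_sub (hT₃ t ht3) hint2]
    congr 1
    funext u
    ring
  rw [Real.dist_eq, hsub]
  have hbound : ∀ u ∈ Set.uIoc t (a * t), ‖(ψ u - l) / u‖ ≤ δ / (m * t) := by
    intro u hu
    have hu1 := hlow u hu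
    have hupos : 0 < u := lt_of_lt_of_le hmt hu1
    rw [Real.norm_eq_abs, abs_div, abs_of_pos hupos]
    exact div_le_div₀ hδpos.le (le_of_lt (hT₂ u (le_trans htm hu1))) hmt hu1
  have hkey := intervalIntegral.norm_integral_le_of_norm_le_const hbound
  rw [Real.norm_eq_abs] at hkey
  have habs : |a * t - t| = |a - 1| * t := by
    rw [show a * t - t = (a - 1) * t by ring, abs_mul, abs_of_pos htpos]
  have hfin : δ / (m * t) * |a * t - t| = δ * (|a - 1| / m) := by
    rw [habs]; field_simp
  have hlt : δ * (|a - 1| / m) < ε := by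
    have hε' : δ * (|a - 1| / m + 1) = ε := div_mul_cancel₀ _ (by linarith)
    nlinarith
  calc |∫ u in t..(a * t), (ψ u - l) / u| ≤ δ / (m * t) * |a * t - t| := hkey
    _ = δ * (|a - 1| / m) := hfin
    _ < ε := hlt

theorem integral_phi_ratio_limit
    (B α : ℝ) (hB : 0 < B) (hα : 0 < α)
    (φ : ℝ → ℝ) (hφC1 : ContDiffOn ℝ 1 φ (Set.Ici B))
    (hφlim : Tendsto φ atTop (nhds 0))
    (hφ' : Tendsto (fun t => t * deriv φ t / φ t) atTop (nhds (-α))) :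
    ∀ a : ℝ, 0 < a →
      Tendsto (fun t => ∫ x in (1:ℝ)..a, φ (t * x) / (x * φ t)) atTop
        (nhds ((1 - a ^ (-α)) / α)) := by
  intro a ha
  set m : ℝ := min 1 a with hm_def
  have hm : 0 < m := lt_min one_pos ha
  have hm1 : m ≤ 1 := min_le_left _ _
  have hma : m ≤ a := min_le_right _ _
  -- basic regularity facts
  have hφcont : ContinuousOn φ (Set.Ici B) := hφC1.continuousOn
  have hφdiff : ∀ t, B < t → HasDerivAt φ (deriv φ t) t := fun t ht =>
    ((hφC1.differentiableOn one_ne_zero).differentiableAt (Ici_mem_nhds ht)).hasDerivAt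
  have hderivcont : ContinuousOn (deriv φ) (Set.Ioi B) := by
    have h1 : ContinuousOn (derivWithin φ (Set.Ici B)) (Set.Ici B) :=
      hφC1.continuousOn_derivWithin (uniqueDiffOn_Ici B) le_rfl
    exact (h1.mono Set.Ioi_subset_Ici_self).congr fun u hu =>
      (derivWithin_of_mem_nhds (Ici_mem_nhds hu)).symm
  have hf0cont : ContinuousOn (fun u => φ u / u) (Set.Ioi B) :=
    (hφcont.mono Set.Ioi_subset_Ici_self).div continuousOn_id
      (fun u hu => ne_of_gt (lt_trans hB hu))
  have hf0int : ∀ p q : ℝ, B < p → B < q →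
      IntervalIntegrable (fun u => φ u / u) volume p q := fun p q hp hq =>
    (hf0cont.mono (Set.ordConnected_Ioi.uIcc_subset hp hq)).intervalIntegrable
  -- the threshold T₁
  have hL : ∀ᶠ t in atTop, t * deriv φ t / φ t < -α / 2 :=
    hφ'.eventually_lt_const (by linarith)
  obtain ⟨T₀, hT₀⟩ := eventually_atTop.mp hL
  set c : ℝ := B + 1 with hc_def
  have hc : B < c := by simp [hc_def]
  set T₁ : ℝ := max T₀ (c + 1) with hT₁def
  have hT₁B : ∀ u, T₁ ≤ u → B < u := fun u hu => by
    have : c + 1 ≤ u := le_trans (le_max_right _ _) hu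
    simp only [hc_def] at this; linarith
  have hT₁c : ∀ u, T₁ ≤ u → c < u := fun u hu => by
    have : c + 1 ≤ u := le_trans (le_max_right _ _) hu; linarith
  have hT₁pos : ∀ u, T₁ ≤ u → 0 < u := fun u hu => lt_trans hB (hT₁B u hu)
  have hT₁L : ∀ u, T₁ ≤ u → u * deriv φ u / φ u < -α / 2 := fun u hu =>
    hT₀ u (le_trans (le_max_left _ _) hu)
  have hφne : ∀ u, T₁ ≤ u → φ u ≠ 0 := by
    intro u hu h0
    have h := hT₁L u hu
    rw [h0, div_zero] at h; linarith
  have hdne : ∀ u, T₁ ≤ u → deriv φ u ≠ 0 := by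
    intro u hu h0
    have h := hT₁L u hu
    rw [h0, mul_zero, zero_div] at h; linarith
  -- φ has constant sign on [T₁, ∞)
  have hsign : ∀ u, T₁ ≤ u → 0 < φ u * φ T₁ := by
    intro u hu
    by_contra h
    push_neg at h
    have hne' : φ u * φ T₁ ≠ 0 := mul_ne_zero (hφne u hu) (hφne T₁ le_rfl)
    have hneg : φ u * φ T₁ < 0 := lt_of_le_of_ne h hne'
    have hsub : Set.uIcc T₁ u ⊆ Set.Ici T₁ := by
      rw [Set.uIcc_of_le hu]
      exact fun x hx => hx.1
    have hcont : ContinuousOn φ (Set.uIcc T₁ u) :=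
      hφcont.mono (fun x hx => le_of_lt (hT₁B x (hsub hx)))
    have h0mem : (0 : ℝ) ∈ Set.uIcc (φ T₁) (φ u) := by
      rcases mul_neg_iff.mp hneg with ⟨h1, h2⟩ | ⟨h1, h2⟩
      · exact Set.mem_uIcc.mpr (Or.inl ⟨h2.le, h1.le⟩)
      · exact Set.mem_uIcc.mpr (Or.inr ⟨h1.le, h2.le⟩)
    obtain ⟨v, hv, hφv⟩ := intermediate_value_uIcc hcont h0mem
    exact hφne v (hsub hv) hφv
  -- the master threshold T
  set T : ℝ := T₁ / m with hTdef
  have hT₁pos' : 0 < T₁ := hT₁pos T₁ le_rfl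
  have hTT₁ : T₁ ≤ T := by
    rw [hTdef, le_div_iff₀ hm]
    nlinarith
  have hmem : ∀ t, T ≤ t → ∀ u ∈ Set.uIcc t (a * t), T₁ ≤ u := by
    intro t ht u hu
    have htpos : 0 < t := lt_of_lt_of_le (lt_of_lt_of_le hT₁pos' hTT₁) ht
    have hmt : T₁ ≤ m * t := by
      rw [hTdef] at ht
      have : T₁ = m * (T₁ / m) := by field_simp
      rw [this]; nlinarith
    have hmin : m * t ≤ min t (a * t) := le_min (by nlinarith) (by nlinarith)
    exact le_trans hmt (le_trans hmin hu.1)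
  have hTpos : 0 < T := lt_of_lt_of_le hT₁pos' hTT₁
  -- the log identity
  have hquotcont : ContinuousOn (fun u => deriv φ u / φ u) (Set.Ici T₁) :=
    (hderivcont.mono (fun u hu => hT₁B u hu)).div
      (hφcont.mono (fun u hu => le_of_lt (hT₁B u hu))) (fun u hu => hφne u hu)
  have hquotint : ∀ t, T ≤ t →
      IntervalIntegrable (fun u => deriv φ u / φ u) volume t (a * t) := fun t ht =>
    (hquotcont.mono (fun u hu => hmem t ht u hu)).intervalIntegrable
  have hlog : ∀ t, T ≤ t →
      Real.log (φ (a * t)) - Real.log (φ t) = ∫ u in t..(a * t), deriv φ u / φ u := by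
    intro t ht
    have h1 : ∀ u ∈ Set.uIcc t (a * t),
        HasDerivAt (fun y => Real.log (φ y)) (deriv φ u / φ u) u := fun u hu =>
      (hφdiff u (hT₁B u (hmem t ht u hu))).log (hφne u (hmem t ht u hu))
    exact (intervalIntegral.integral_eq_sub_of_hasDerivAt h1 (hquotint t ht)).symm
  -- limit of the log integral
  have hIlim : Tendsto (fun t => ∫ u in t..(a * t), deriv φ u / φ u) atTop
      (nhds (-α * Real.log a)) := by
    have hint : ∀ᶠ t in atTop,
        IntervalIntegrable (fun u => (u * deriv φ u / φ u) / u) volume t (a * t) := by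
      filter_upwards [eventually_ge_atTop T] with t ht
      have hcont : ContinuousOn (fun u => (u * deriv φ u / φ u) / u)
          (Set.uIcc t (a * t)) := by
        refine ContinuousOn.div ?_ continuousOn_id
          (fun u hu => ne_of_gt (hT₁pos u (hmem t ht u hu)))
        exact ((continuousOn_id.mul
          (hderivcont.mono (fun u hu => hT₁B u (hmem t ht u hu)))).div
          (hφcont.mono (fun u hu => le_of_lt (hT₁B u (hmem t ht u hu))))
          (fun u hu => hφne u (hmem t ht u hu)))
      exact hcont.intervalIntegrable
    have h0 := aux_tendsto_int hm hm1 hma hφ' hint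
    refine h0.congr' ?_
    filter_upwards [eventually_ge_atTop T] with t ht
    refine intervalIntegral.integral_congr fun u hu => ?_
    have hu0 : u ≠ 0 := ne_of_gt (hT₁pos u (hmem t ht u hu))
    have hφu : φ u ≠ 0 := hφne u (hmem t ht u hu)
    field_simp
  -- ratio limit: φ(at)/φ(t) → a^(-α)
  have hrtend : Tendsto (fun t => φ (a * t) / φ t) atTop (nhds (a ^ (-α))) := by
    have h1 : Tendsto (fun t => Real.exp (∫ u in t..(a * t), deriv φ u / φ u)) atTop
        (nhds (Real.exp (-α * Real.log a))) := (Real.continuous_exp.tendsto _).comp hIlim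
    have h2 : Real.exp (-α * Real.log a) = a ^ (-α) := by
      rw [Real.rpow_def_of_pos ha, mul_comm]
    rw [h2] at h1
    refine h1.congr' ?_
    filter_upwards [eventually_ge_atTop T] with t ht
    have hta : T₁ ≤ a * t := hmem t ht (a * t) Set.right_mem_uIcc
    have htt : T₁ ≤ t := hmem t ht t Set.left_mem_uIcc
    have hprod : 0 < φ (a * t) * φ t := by
      have h1 := hsign (a * t) hta
      have h2 := hsign t htt
      nlinarith [sq_nonneg (φ T₁)]
    have hdivpos : 0 < φ (a * t) / φ t := by
      rcases mul_pos_iff.mp hprod with ⟨hx, hy⟩ | ⟨hx, hy⟩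
      · exact div_pos hx hy
      · exact div_pos_of_neg_of_neg hx hy
    rw [← hlog t ht, Real.exp_sub, Real.exp_log_eq_abs (hφne _ hta),
      Real.exp_log_eq_abs (hφne _ htt), ← abs_div, abs_of_pos hdivpos]
  -- antiderivative G
  set G : ℝ → ℝ := fun s => ∫ u in c..s, φ u / u with hGdef
  have hG : ∀ s, B < s → HasDerivAt G (φ s / s) s := fun s hs =>
    intervalIntegral.integral_hasDerivAt_right (hf0int c s hc hs)
      (ContinuousOn.stronglyMeasurableAtFilter isOpen_Ioi hf0cont s hs)
      (hf0cont.continuousAt (Ioi_mem_nhds hs))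
  -- eventual derivative of f = G(a·) - G
  have hff' : ∀ᶠ t in atTop, HasDerivAt (fun y => G (a * y) - G y)
      (φ (a * t) / (a * t) * a - φ t / t) t := by
    filter_upwards [eventually_ge_atTop T] with t ht
    have hta : T₁ ≤ a * t := hmem t ht (a * t) Set.right_mem_uIcc
    have htt : T₁ ≤ t := hmem t ht t Set.left_mem_uIcc
    have hlin : HasDerivAt (fun y : ℝ => a * y) a t := by
      simpa using (hasDerivAt_id t).const_mul a
    have h2 : HasDerivAt (fun y => G (a * y)) (φ (a * t) / (a * t) * a) t := by
      have := (hG (a * t) (hT₁B _ hta)).comp t hlin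
      exact this
    exact h2.sub (hG t (hT₁B _ htt))
  have hgg' : ∀ᶠ t in atTop, HasDerivAt φ (deriv φ t) t := by
    filter_upwards [eventually_ge_atTop T] with t ht
    exact hφdiff t (hT₁B t (le_trans hTT₁ ht))
  have hg'ne : ∀ᶠ t in atTop, deriv φ t ≠ 0 := by
    filter_upwards [eventually_ge_atTop T] with t ht
    exact hdne t (le_trans hTT₁ ht)
  -- f → 0
  have hftop : Tendsto (fun t => G (a * t) - G t) atTop (nhds 0) := by
    have hint : ∀ᶠ t in atTop,
        IntervalIntegrable (fun u => φ u / u) volume t (a * t) := by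
      filter_upwards [eventually_ge_atTop T] with t ht
      exact hf0int t (a * t) (hT₁B t (hmem t ht t Set.left_mem_uIcc))
        (hT₁B _ (hmem t ht (a * t) Set.right_mem_uIcc))
    have h0 := aux_tendsto_int hm hm1 hma hφlim hint
    rw [zero_mul] at h0
    refine h0.congr' ?_
    filter_upwards [eventually_ge_atTop T] with t ht
    exact (intervalIntegral.integral_interval_sub_left
      (hf0int c (a * t) hc (hT₁B _ (hmem t ht (a * t) Set.right_mem_uIcc)))
      (hf0int c t hc (hT₁B t (hmem t ht t Set.left_mem_uIcc)))).symm
  -- derivative quotient limit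
  have hdiv : Tendsto (fun t => (φ (a * t) / (a * t) * a - φ t / t) / deriv φ t) atTop
      (nhds ((1 - a ^ (-α)) / α)) := by
    have h1 : Tendsto (fun t => (φ (a * t) / φ t - 1) / (t * deriv φ t / φ t)) atTop
        (nhds ((a ^ (-α) - 1) / (-α))) :=
      (hrtend.sub tendsto_const_nhds).div hφ' (by simpa using hα.ne')
    have h2 : (a ^ (-α) - 1) / (-α) = (1 - a ^ (-α)) / α := by
      rw [show a ^ (-α) - 1 = -(1 - a ^ (-α)) by ring, neg_div_neg_eq]
    rw [h2] at h1
    refine h1.congr' ?_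
    filter_upwards [eventually_ge_atTop T] with t ht
    have hta : T₁ ≤ a * t := hmem t ht (a * t) Set.right_mem_uIcc
    have htt : T₁ ≤ t := hmem t ht t Set.left_mem_uIcc
    have ht0 : t ≠ 0 := ne_of_gt (hT₁pos t htt)
    have hφt : φ t ≠ 0 := hφne t htt
    have hd : deriv φ t ≠ 0 := hdne t htt
    field_simp
  -- L'Hôpital
  have hmain : Tendsto (fun t => (G (a * t) - G t) / φ t) atTop
      (nhds ((1 - a ^ (-α)) / α)) :=
    HasDerivAt.lhopital_zero_atTop hff' hgg' hg'ne hftop hφlim hdiv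
  -- transfer back to the original integral
  refine hmain.congr' ?_
  filter_upwards [eventually_ge_atTop T] with t ht
  have hta : T₁ ≤ a * t := hmem t ht (a * t) Set.right_mem_uIcc
  have htt : T₁ ≤ t := hmem t ht t Set.left_mem_uIcc
  have htpos : 0 < t := hT₁pos t htt
  have hφt : φ t ≠ 0 := hφne t htt
  have heq1 : (G (a * t) - G t) = ∫ u in t..(a * t), φ u / u :=
    intervalIntegral.integral_interval_sub_left
      (hf0int c (a * t) hc (hT₁B _ hta)) (hf0int c t hc (hT₁B t htt))
  have hstep2 : (∫ x in (1:ℝ)..a, t * (φ (t * x) / (t * x))) = ∫ u in t..(a * t), φ u / u := by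
    rw [intervalIntegral.integral_const_mul, ← smul_eq_mul,
      intervalIntegral.smul_integral_comp_mul_left (fun u => φ u / u) t,
      mul_one, mul_comm t a]
  have hstep1 : (∫ x in (1:ℝ)..a, φ (t * x) / (x * φ t))
      = ∫ x in (1:ℝ)..a, (t * (φ (t * x) / (t * x))) / φ t := by
    refine intervalIntegral.integral_congr fun x hx => ?_
    have hx0 : x ≠ 0 := ne_of_gt (lt_of_lt_of_le hm hx.1)
    field_simp
  rw [hstep1, intervalIntegral.integral_div, hstep2, heq1]
end

section
/- Let f ∈ NRV_{σ+1} with σ > p - 2 > -1, and suppose additionally that t f'(t)/f(t) → σ + 1 as t → ∞ with the rate condition lim_{t→∞} [t f'(t)/f(t) - (σ+1)] / 𝓕(t) = 0, where 𝓕(t) = ((p-1)/p)^{1/p} ∫_t^∞ F(x)^{-1/p} dx. Then also lim_{t→∞} [F(t)/(t f(t)) - 1/(σ+2)] / 𝓕(t) = 0. -/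
open Filter MeasureTheory Real

private lemma primitive_contOn_Ici {g : ℝ → ℝ} {B : ℝ}
    (hg : ∀ t, B ≤ t → IntervalIntegrable g MeasureTheory.volume B t) :
    ContinuousOn (fun u => ∫ s in B..u, g s) (Set.Ici B) := by
  intro x hx
  have hx' : B ≤ x := hx
  have hxm : x ∈ Set.uIcc B (x + 1) := by
    rw [Set.uIcc_of_le (by linarith)]; exact ⟨hx', by linarith⟩
  have h := intervalIntegral.continuousOn_primitive_interval'
    (hg (x + 1) (by linarith)) (Set.left_mem_uIcc (a := B) (b := x + 1))
  refine (h x hxm).mono_of_mem_nhdsWithin ?_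
  have h1 : Set.Ici B ∩ Set.Iio (x + 1) ∈ nhdsWithin x (Set.Ici B) :=
    inter_mem_nhdsWithin _ (Iio_mem_nhds (by linarith))
  refine Filter.mem_of_superset h1 ?_
  rw [Set.uIcc_of_le (by linarith)]
  exact fun y hy => ⟨hy.1, hy.2.le⟩

/-- If `a * G x ≤ x * G' x` on `[T, ∞)` then `G x * x^(-a)` is monotone there. -/
private lemma rpow_comp_mono_aux {G g : ℝ → ℝ} {a T : ℝ} (hT : 0 < T)
    (hG : ∀ x, T ≤ x → HasDerivAt G (g x) x)
    (hineq : ∀ x, T ≤ x → a * G x ≤ x * g x) :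
    MonotoneOn (fun x => G x * x ^ (-a)) (Set.Ici T) := by
  have hH : ∀ x, T ≤ x → HasDerivAt (fun x => G x * x ^ (-a))
      (g x * x ^ (-a) + G x * (-a * x ^ (-a - 1))) x := by
    intro x hx
    exact (hG x hx).mul (Real.hasDerivAt_rpow_const (Or.inl (ne_of_gt (lt_of_lt_of_le hT hx))))
  refine monotoneOn_of_deriv_nonneg (convex_Ici T) ?_ ?_ ?_
  · exact fun x hx => ((hH x hx).continuousAt).continuousWithinAt
  · intro x hx
    rw [interior_Ici] at hx
    exact (hH x (le_of_lt hx)).differentiableAt.differentiableWithinAt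
  · intro x hx
    rw [interior_Ici] at hx
    have hx0 : 0 < x := lt_of_lt_of_le hT hx.le
    rw [(hH x hx.le).deriv]
    have e1 : x ^ (-a) = x ^ (-a - 1) * x := by
      rw [← Real.rpow_add_one (ne_of_gt hx0) (-a - 1)]; ring_nf
    have e2 : g x * x ^ (-a) + G x * (-a * x ^ (-a - 1))
        = x ^ (-a - 1) * (x * g x - a * G x) := by rw [e1]; ring
    rw [e2]
    exact mul_nonneg (Real.rpow_nonneg hx0.le _) (sub_nonneg.2 (hineq x hx.le))

private lemma rpow_comp_ineq {G : ℝ → ℝ} {a s t : ℝ} (hs : 0 < s) (hst : s ≤ t)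
    (h : G s * s ^ (-a) ≤ G t * t ^ (-a)) : G s * (t / s) ^ a ≤ G t := by
  have ht0 : 0 < t := lt_of_lt_of_le hs hst
  have hsa : (0:ℝ) < s ^ a := Real.rpow_pos_of_pos hs a
  have hta : (0:ℝ) < t ^ a := Real.rpow_pos_of_pos ht0 a
  rw [Real.rpow_neg hs.le, Real.rpow_neg ht0.le] at h
  have e2 : (t / s) ^ a = t ^ a * (s ^ a)⁻¹ := by
    rw [Real.div_rpow ht0.le hs.le, div_eq_mul_inv]
  calc G s * (t / s) ^ a = G s * (s ^ a)⁻¹ * t ^ a := by rw [e2]; ring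
    _ ≤ G t * (t ^ a)⁻¹ * t ^ a := mul_le_mul_of_nonneg_right h hta.le
    _ = G t := by field_simp

private lemma rpow_comp_lower {G g : ℝ → ℝ} {a T : ℝ} (hT : 0 < T)
    (hG : ∀ x, T ≤ x → HasDerivAt G (g x) x)
    (hineq : ∀ x, T ≤ x → a * G x ≤ x * g x) :
    ∀ s t, T ≤ s → s ≤ t → G s * (t / s) ^ a ≤ G t := by
  intro s t hs hst
  exact rpow_comp_ineq (lt_of_lt_of_le hT hs) hst
    (rpow_comp_mono_aux hT hG hineq hs (le_trans hs hst) hst)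

private lemma rpow_comp_upper {G g : ℝ → ℝ} {a T : ℝ} (hT : 0 < T)
    (hG : ∀ x, T ≤ x → HasDerivAt G (g x) x)
    (hineq : ∀ x, T ≤ x → x * g x ≤ a * G x) :
    ∀ s t, T ≤ s → s ≤ t → G t ≤ G s * (t / s) ^ a := by
  intro s t hs hst
  have hs0 : 0 < s := lt_of_lt_of_le hT hs
  have ht0 : 0 < t := lt_of_lt_of_le hs0 hst
  have hmono := rpow_comp_mono_aux (G := fun x => -G x) (g := fun x => -g x) (a := a) hT
    (fun x hx => (hG x hx).neg) (fun x hx => by simpa using neg_le_neg (hineq x hx))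
    hs (le_trans hs hst) hst
  simp only [neg_mul] at hmono
  have := rpow_comp_ineq (G := fun x => -G x) hs0 hst (by simpa using hmono)
  simp only [neg_mul] at this
  linarith

private lemma rpow_split {C s x a e : ℝ} (hC : 0 ≤ C) (hs : 0 < s) (hx : 0 < x) :
    (C * (x / s) ^ a) ^ e = C ^ e * s ^ (-(a * e)) * x ^ (a * e) := by
  have hds : 0 < x / s := div_pos hx hs
  rw [Real.mul_rpow hC (Real.rpow_nonneg hds.le a), ← Real.rpow_mul hds.le,
    Real.div_rpow hx.le hs.le, Real.rpow_neg hs.le, div_eq_mul_inv]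
  ring

set_option maxHeartbeats 2000000 in
theorem rate_F_over_tf
    (B A₀ p σ α : ℝ) (hB : 0 < B) (hA : 0 < A₀) (hp : 1 < p) (hσ : p - 2 < σ)
    (hα₁ : (σ + 2) / p - 1 < α) (hα₂ : α < σ + 2)
    (φ : ℝ → ℝ) (hφC1 : ContDiffOn ℝ 1 φ (Set.Ici B))
    (hφlim : Tendsto φ atTop (nhds 0))
    (hφ' : Tendsto (fun t => t * deriv φ t / φ t) atTop (nhds (-α)))
    (f : ℝ → ℝ)
    (hf : ∀ u, B ≤ u → f u = A₀ * u ^ (σ + 1) * Real.exp (∫ s in B..u, φ s / s))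
    (F : ℝ → ℝ) (hF : ∀ t, F t = ∫ s in B..t, f s)
    (𝓕 : ℝ → ℝ)
    (h𝓕 : ∀ t, 𝓕 t = ((p - 1) / p) ^ ((1:ℝ)/p) * ∫ x in Set.Ioi t, F x ^ (-(1:ℝ)/p))
    (hrate : Tendsto (fun t => (t * deriv f t / f t - (σ + 1)) / 𝓕 t) atTop (nhds 0)) :
    Tendsto (fun t => (F t / (t * f t) - 1 / (σ + 2)) / 𝓕 t) atTop (nhds 0) := by
  have hp0 : (0:ℝ) < p := by linarith
  have hσ2p : p < σ + 2 := by linarith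
  have hσ2 : (0:ℝ) < σ + 2 := by linarith
  -- basic constants
  set ε₀ : ℝ := min ((σ + 2 - p) / 2) ((σ + 2) * (p - 1) / 2) with hε₀def
  have hε₀pos : 0 < ε₀ := by
    apply lt_min <;> nlinarith
  have hε₀1 : p < σ + 2 - ε₀ := by
    have := min_le_left ((σ + 2 - p) / 2) ((σ + 2) * (p - 1) / 2)
    rw [← hε₀def] at this; linarith
  have hε₀2 : σ + 2 + ε₀ < p * (σ + 2) := by
    have := min_le_right ((σ + 2 - p) / 2) ((σ + 2) * (p - 1) / 2)
    rw [← hε₀def] at this; nlinarith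
  set m : ℝ := (σ + 2 + ε₀) / p with hmdef
  have hm1 : 1 < m := by rw [hmdef, lt_div_iff₀ hp0]; linarith
  have hmσ2 : m < σ + 2 := by rw [hmdef, div_lt_iff₀ hp0]; nlinarith
  have hmσ : m - 1 < σ + 2 := by linarith
  set δ : ℝ := (σ + 2 - (m - 1)) / 2 with hδdef
  have hδpos : 0 < δ := by rw [hδdef]; linarith
  set c : ℝ := ((p - 1) / p) ^ ((1:ℝ)/p) with hcdef
  have hcpos : 0 < c := Real.rpow_pos_of_pos (div_pos (by linarith) hp0) _
  -- rewrite F and 𝓕 as functions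
  have hFeq : F = fun u => ∫ s in B..u, f s := funext hF
  have h𝓕eq : 𝓕 = fun t => c * ∫ x in Set.Ioi t, F x ^ (-(1:ℝ)/p) := funext h𝓕
  -- continuity of φ and of s ↦ φ s / s
  have hφcont : ContinuousOn φ (Set.Ici B) := hφC1.continuousOn
  have hg0cont : ContinuousOn (fun s => φ s / s) (Set.Ici B) :=
    hφcont.div continuousOn_id (fun s hs => ne_of_gt (lt_of_lt_of_le hB hs))
  have hg0int : ∀ t, B ≤ t → IntervalIntegrable (fun s => φ s / s) volume B t := by
    intro t ht
    exact (hg0cont.mono (by rw [Set.uIcc_of_le ht]; exact Set.Icc_subset_Ici_self)).intervalIntegrable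
  set I : ℝ → ℝ := fun u => ∫ s in B..u, φ s / s with hIdef
  have hIcont : ContinuousOn I (Set.Ici B) := primitive_contOn_Ici hg0int
  -- positivity and continuity of f
  have hfpos : ∀ u, B ≤ u → 0 < f u := by
    intro u hu
    rw [hf u hu]
    have : (0:ℝ) < u := lt_of_lt_of_le hB hu
    exact mul_pos (mul_pos hA (Real.rpow_pos_of_pos this _)) (Real.exp_pos _)
  have hfcont : ContinuousOn f (Set.Ici B) := by
    have : ContinuousOn (fun u => A₀ * u ^ (σ + 1) * Real.exp (I u)) (Set.Ici B) := by
      refine ContinuousOn.mul (ContinuousOn.mul continuousOn_const ?_) (hIcont.rexp)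
      exact fun x hx => ((Real.continuousAt_rpow_const x (σ+1)
        (Or.inl (ne_of_gt (lt_of_lt_of_le hB hx)))).continuousWithinAt)
    exact this.congr (fun u hu => hf u hu)
  have hfint : ∀ s t, B ≤ s → B ≤ t → IntervalIntegrable f volume s t := by
    intro s t hs ht
    refine (hfcont.mono ?_).intervalIntegrable
    intro x hx
    rcases Set.mem_uIcc.1 hx with h | h
    · exact le_trans hs h.1
    · exact le_trans ht h.1
  have hmemIci : ∀ t : ℝ, B < t → Set.Ici B ∈ nhds t := fun t ht =>
    Filter.mem_of_superset (Ioi_mem_nhds ht) Set.Ioi_subset_Ici_self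
  have hIderiv : ∀ t, B < t → HasDerivAt I (φ t / t) t := by
    intro t ht
    exact intervalIntegral.integral_hasDerivAt_right (hg0int t ht.le)
      ((hg0cont.mono Set.Ioi_subset_Ici_self).stronglyMeasurableAtFilter isOpen_Ioi t ht)
      (hg0cont.continuousAt (hmemIci t ht))
  have hfderiv : ∀ t, B < t → HasDerivAt f ((σ + 1 + φ t) * f t / t) t := by
    intro t ht
    have ht0 : 0 < t := lt_trans hB ht
    have h1 : HasDerivAt (fun u : ℝ => u ^ (σ + 1)) ((σ + 1) * t ^ (σ + 1 - 1)) t :=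
      Real.hasDerivAt_rpow_const (Or.inl (ne_of_gt ht0))
    have h2 : HasDerivAt (fun u => Real.exp (I u)) (Real.exp (I t) * (φ t / t)) t :=
      (hIderiv t ht).exp
    have h3 : HasDerivAt (fun u => A₀ * u ^ (σ + 1) * Real.exp (I u))
        (A₀ * ((σ + 1) * t ^ (σ + 1 - 1)) * Real.exp (I t)
          + A₀ * t ^ (σ + 1) * (Real.exp (I t) * (φ t / t))) t :=
      (h1.const_mul A₀).mul h2
    have heq : f =ᶠ[nhds t] fun u => A₀ * u ^ (σ + 1) * Real.exp (I u) := by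
      filter_upwards [hmemIci t ht] with u hu using hf u hu
    have h4 : HasDerivAt f
        (A₀ * ((σ + 1) * t ^ (σ + 1 - 1)) * Real.exp (I t)
          + A₀ * t ^ (σ + 1) * (Real.exp (I t) * (φ t / t))) t :=
      h3.congr_of_eventuallyEq heq
    have hft : f t = A₀ * t ^ (σ + 1) * Real.exp (I t) := hf t ht.le
    have hpow : t ^ (σ + 1 - 1) = t ^ (σ + 1) / t := by
      rw [Real.rpow_sub ht0, Real.rpow_one]
    convert h4 using 1
    rw [hft, hpow]
    field_simp
  have htfderiv : ∀ t, B < t → HasDerivAt (fun u => u * f u) ((σ + 2 + φ t) * f t) t := by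
    intro t ht
    have ht0 : 0 < t := lt_trans hB ht
    have h := (hasDerivAt_id' t).mul (hfderiv t ht)
    refine h.congr_deriv ?_
    field_simp
    ring
  have hFderiv : ∀ t, B < t → HasDerivAt F (f t) t := by
    intro t ht
    rw [hFeq]
    exact intervalIntegral.integral_hasDerivAt_right (hfint B t le_rfl ht.le)
      ((hfcont.mono Set.Ioi_subset_Ici_self).stronglyMeasurableAtFilter isOpen_Ioi t ht)
      (hfcont.continuousAt (hmemIci t ht))
  have hFcont : ContinuousOn F (Set.Ici B) := by
    rw [hFeq]; exact primitive_contOn_Ici (fun t ht => hfint B t le_rfl ht)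
  have hFsub : ∀ s t, B ≤ s → B ≤ t → F t - F s = ∫ x in s..t, f x := by
    intro s t hs ht
    rw [hFeq]
    exact intervalIntegral.integral_interval_sub_left (hfint B t le_rfl ht) (hfint B s le_rfl hs)
  have hFmono : ∀ s t, B ≤ s → s ≤ t → F s ≤ F t := by
    intro s t hs hst
    have h := hFsub s t hs (le_trans hs hst)
    have h2 : 0 ≤ ∫ x in s..t, f x :=
      intervalIntegral.integral_nonneg hst (fun x hx => (hfpos x (le_trans hs hx.1)).le)
    linarith
  have hFpos : ∀ t, B < t → 0 < F t := by
    intro t ht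
    have h := hFsub B t le_rfl ht.le
    have hFB : F B = 0 := by rw [hFeq]; simp
    have hpos : 0 < ∫ x in B..t, f x :=
      intervalIntegral.intervalIntegral_pos_of_pos_on (hfint B t le_rfl ht.le)
        (fun x hx => hfpos x hx.1.le) ht
    linarith
  have hφfint : ∀ s t, B ≤ s → B ≤ t → IntervalIntegrable (fun x => φ x * f x) volume s t := by
    intro s t hs ht
    have hsub : Set.uIcc s t ⊆ Set.Ici B := by
      intro x hx
      rcases Set.mem_uIcc.1 hx with h | h
      · exact le_trans hs h.1
      · exact le_trans ht h.1
    exact ((hφcont.mono hsub).mul (hfcont.mono hsub)).intervalIntegrable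
  have hkeyid : ∀ s t, B < s → s ≤ t →
      t * f t - s * f s = (σ + 2) * (F t - F s) + ∫ x in s..t, φ x * f x := by
    intro s t hs hst
    have hsub' : Set.uIcc s t ⊆ Set.Ici B := by
      rw [Set.uIcc_of_le hst]; exact fun x hx => le_trans hs.le hx.1
    have hder : ∀ x ∈ Set.uIcc s t, HasDerivAt (fun u => u * f u) ((σ + 2 + φ x) * f x) x := by
      intro x hx
      rw [Set.uIcc_of_le hst] at hx
      exact htfderiv x (lt_of_lt_of_le hs hx.1)
    have hint1 : IntervalIntegrable (fun x => (σ + 2 + φ x) * f x) volume s t :=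
      ((continuousOn_const.add (hφcont.mono hsub')).mul (hfcont.mono hsub')).intervalIntegrable
    have heq := intervalIntegral.integral_eq_sub_of_hasDerivAt hder hint1
    have hBs : B ≤ s := hs.le
    have hBt : B ≤ t := le_trans hs.le hst
    have hsplit : ∫ x in s..t, (σ + 2 + φ x) * f x
        = ((σ + 2) * ∫ x in s..t, f x) + ∫ x in s..t, φ x * f x := by
      have e : (fun x => (σ + 2 + φ x) * f x) = fun x => (σ + 2) * f x + φ x * f x := by
        funext x; ring
      rw [e, intervalIntegral.integral_add ((hfint s t hBs hBt).const_mul (σ + 2))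
        (hφfint s t hBs hBt), intervalIntegral.integral_const_mul]
    rw [hsplit] at heq
    rw [hFsub s t hBs hBt]
    linarith
  -- choose T₁ > B beyond which |φ| is small
  set εφ : ℝ := min (ε₀ / 2) δ with hεφdef
  have hεφpos : 0 < εφ := lt_min (by linarith) hδpos
  have hεφε₀ : εφ ≤ ε₀ / 2 := min_le_left _ _
  have hεφδ : εφ ≤ δ := min_le_right _ _
  obtain ⟨T₀, hT₀⟩ := Metric.tendsto_atTop.1 hφlim εφ hεφpos
  set T₁ : ℝ := max T₀ (B + 1) with hT₁def
  have hT₁B : B < T₁ := lt_of_lt_of_le (by linarith) (le_max_right _ _)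
  have hT₁0 : 0 < T₁ := lt_trans hB hT₁B
  have hφsmall : ∀ t, T₁ ≤ t → |φ t| ≤ εφ := by
    intro t ht
    have h := hT₀ t (le_trans (le_max_left _ _) ht)
    rw [Real.dist_eq, sub_zero] at h
    exact h.le
  have hσ1ε : 0 < σ + 1 - ε₀ := by linarith
  -- lower bound for f beyond T₁
  have hfq : ∀ x, T₁ ≤ x → (σ + 1 - ε₀) * f x ≤ x * ((σ + 1 + φ x) * f x / x) := by
    intro x hx
    have hx0 : 0 < x := lt_of_lt_of_le hT₁0 hx
    have e : x * ((σ + 1 + φ x) * f x / x) = (σ + 1 + φ x) * f x := by field_simp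
    rw [e]
    have h1 : -εφ ≤ φ x := neg_abs_le (φ x) |>.trans' (neg_le_neg (hφsmall x hx))
    have h2 : (0:ℝ) < f x := hfpos x (le_trans hT₁B.le hx)
    nlinarith
  have hflow : ∀ t, T₁ ≤ t → f T₁ ≤ f t := by
    intro t ht
    have h := rpow_comp_lower (a := σ + 1 - ε₀) hT₁0
      (fun x hx => hfderiv x (lt_of_lt_of_le hT₁B hx)) hfq T₁ t le_rfl ht
    have h1 : (1:ℝ) ≤ (t / T₁) ^ (σ + 1 - ε₀) := by
      have h2 : (t / T₁) ^ (0:ℝ) ≤ (t / T₁) ^ (σ + 1 - ε₀) :=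
        Real.rpow_le_rpow_of_exponent_le (by rw [le_div_iff₀ hT₁0]; linarith) hσ1ε.le
      rwa [Real.rpow_zero] at h2
    nlinarith [hfpos T₁ hT₁B.le]
  -- F tends to infinity
  have hFtop : Tendsto F atTop atTop := by
    refine tendsto_atTop_mono' atTop ?_
      (tendsto_atTop_add_const_right atTop (F T₁ - f T₁ * T₁)
        (tendsto_id.const_mul_atTop (hfpos T₁ hT₁B.le)))
    filter_upwards [eventually_ge_atTop T₁] with t ht
    have hBt : B ≤ t := le_trans hT₁B.le ht
    have h2 : ∫ x in T₁..t, f T₁ ≤ ∫ x in T₁..t, f x :=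
      intervalIntegral.integral_mono_on ht intervalIntegrable_const
        (hfint T₁ t hT₁B.le hBt) (fun x hx => hflow x hx.1)
    rw [intervalIntegral.integral_const, smul_eq_mul] at h2
    have h3 := hFsub T₁ t hT₁B.le hBt
    simp only [id_eq]
    have h4 : (t - T₁) * f T₁ = t * f T₁ - T₁ * f T₁ := by ring
    have h5 : f T₁ * t = t * f T₁ := by ring
    rw [h4] at h2
    rw [h5]
    linarith
  -- control of t f t - (σ+2) F t
  set K : ℝ := T₁ * f T₁ - (σ + 2) * F T₁ with hKdef
  have hNsub : ∀ t, T₁ ≤ t → t * f t - (σ + 2) * F t = K + ∫ x in T₁..t, φ x * f x := by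
    intro t ht
    have h := hkeyid T₁ t hT₁B ht
    rw [hKdef]; linarith
  have hRbound : ∀ s t, T₁ ≤ s → s ≤ t →
      |∫ x in s..t, φ x * f x| ≤ εφ * (F t - F s) := by
    intro s t hs hst
    have hBs : B ≤ s := le_trans hT₁B.le hs
    have hBt : B ≤ t := le_trans hBs hst
    have h1 : |∫ x in s..t, φ x * f x| ≤ ∫ x in s..t, |φ x * f x| :=
      intervalIntegral.abs_integral_le_integral_abs hst
    have h2 : ∫ x in s..t, |φ x * f x| ≤ ∫ x in s..t, εφ * f x := by
      refine intervalIntegral.integral_mono_on hst ((hφfint s t hBs hBt).abs)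
        ((hfint s t hBs hBt).const_mul εφ) (fun x hx => ?_)
      have hx1 : B ≤ x := le_trans hBs hx.1
      rw [abs_mul, abs_of_pos (hfpos x hx1)]
      exact mul_le_mul_of_nonneg_right (hφsmall x (le_trans hs hx.1)) (hfpos x hx1).le
    rw [intervalIntegral.integral_const_mul] at h2
    rw [hFsub s t hBs hBt]
    linarith
  -- two-sided comparison of t f t with F t beyond Tb
  obtain ⟨Tb', hTb'⟩ := Filter.eventually_atTop.1 (hFtop.eventually_ge_atTop (2 * |K| / ε₀ + 1))
  set Tb : ℝ := max Tb' (max T₁ 1) with hTbdef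
  have hTbT₁ : T₁ ≤ Tb := le_trans (le_max_left _ _) (le_max_right _ _)
  have hTbB : B < Tb := lt_of_lt_of_le hT₁B hTbT₁
  have hTb1 : (1:ℝ) ≤ Tb := le_trans (le_max_right _ _) (le_max_right _ _)
  have hTb0 : 0 < Tb := lt_trans hB hTbB
  have hbound : ∀ t, Tb ≤ t →
      (σ + 2 - ε₀) * F t ≤ t * f t ∧ t * f t ≤ (σ + 2 + ε₀) * F t := by
    intro t ht
    have ht1 : T₁ ≤ t := le_trans hTbT₁ ht
    have hBt : B < t := lt_of_lt_of_le hT₁B ht1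
    have hFt : 2 * |K| / ε₀ + 1 ≤ F t := hTb' t (le_trans (le_max_left _ _) ht)
    have hFtpos : 0 < F t := hFpos t hBt
    have hN := hNsub t ht1
    have hR := hRbound T₁ t le_rfl ht1
    have hFm : F T₁ ≤ F t := hFmono T₁ t hT₁B.le ht1
    have hKb : |K| ≤ ε₀ / 2 * F t := by
      have h0 : 2 * |K| / ε₀ ≤ F t := by linarith
      rw [div_le_iff₀ hε₀pos] at h0
      nlinarith
    have habs : |t * f t - (σ + 2) * F t| ≤ ε₀ * F t := by
      rw [hN]
      calc |K + ∫ x in T₁..t, φ x * f x| ≤ |K| + |∫ x in T₁..t, φ x * f x| := abs_add_le _ _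
        _ ≤ ε₀ / 2 * F t + εφ * (F t - F T₁) := add_le_add hKb hR
        _ ≤ ε₀ * F t := by nlinarith [hFpos T₁ hT₁B, hεφpos]
    rw [abs_le] at habs
    constructor <;> nlinarith
  -- comparison bounds for F beyond Tb
  have hFdq : ∀ x, Tb ≤ x → HasDerivAt F (f x) x := fun x hx => hFderiv x (lt_of_lt_of_le hTbB hx)
  have hFupper : ∀ s t, Tb ≤ s → s ≤ t → F t ≤ F s * (t / s) ^ (σ + 2 + ε₀) :=
    rpow_comp_upper hTb0 hFdq (fun x hx => (hbound x hx).2)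
  have hFlower : ∀ s t, Tb ≤ s → s ≤ t → F s * (t / s) ^ (σ + 2 - ε₀) ≤ F t :=
    rpow_comp_lower hTb0 hFdq (fun x hx => (hbound x hx).1)
  have hIciTb : Set.Ici Tb ⊆ Set.Ici B := fun x hx => le_trans hTbB.le hx
  have hFrpowcont : ContinuousOn (fun x => F x ^ (-(1:ℝ)/p)) (Set.Ici Tb) := by
    refine ContinuousOn.rpow_const (hFcont.mono hIciTb)
      (fun x hx => Or.inl (ne_of_gt (hFpos x (lt_of_lt_of_le hTbB hx))))
  -- integrability of F ^ (-1/p) on tails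
  have hq1 : 1 < (σ + 2 - ε₀) / p := by rw [lt_div_iff₀ hp0]; linarith
  have hmm2 : (σ + 2 - ε₀) * (-(1:ℝ)/p) < -1 := by
    have : (σ + 2 - ε₀) * (-(1:ℝ)/p) = -((σ + 2 - ε₀) / p) := by ring
    rw [this]; linarith
  have hFint : ∀ t, Tb ≤ t → IntegrableOn (fun x => F x ^ (-(1:ℝ)/p)) (Set.Ioi t) := by
    intro t ht
    have ht0 : 0 < t := lt_of_lt_of_le hTb0 ht
    have hFTb : 0 < F Tb := hFpos Tb hTbB
    have hmaj : IntegrableOn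
        (fun x => F Tb ^ (-(1:ℝ)/p) * Tb ^ (-((σ + 2 - ε₀) * (-(1:ℝ)/p)))
          * x ^ ((σ + 2 - ε₀) * (-(1:ℝ)/p))) (Set.Ioi t) := by
      have := MeasureTheory.Integrable.const_mul (integrableOn_Ioi_rpow_of_lt hmm2 ht0)
        (F Tb ^ (-(1:ℝ)/p) * Tb ^ (-((σ + 2 - ε₀) * (-(1:ℝ)/p))))
      simpa [mul_assoc, IntegrableOn] using this
    refine Integrable.mono' hmaj
      (((hFrpowcont.mono (fun x hx => le_trans ht (Set.mem_Ioi.1 hx).le)).aestronglyMeasurable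
        measurableSet_Ioi)) ?_
    refine (ae_restrict_iff' measurableSet_Ioi).2 (Filter.Eventually.of_forall (fun x hx => ?_))
    have hx' : Tb ≤ x := le_trans ht (Set.mem_Ioi.1 hx).le
    have hx0 : 0 < x := lt_of_lt_of_le hTb0 hx'
    have hFx : 0 < F x := hFpos x (lt_of_lt_of_le hTbB hx')
    rw [Real.norm_eq_abs, abs_of_nonneg (Real.rpow_nonneg hFx.le _)]
    have h1 : F Tb * (x / Tb) ^ (σ + 2 - ε₀) ≤ F x := hFlower Tb x le_rfl hx'
    have h2 : F x ^ (-(1:ℝ)/p) ≤ (F Tb * (x / Tb) ^ (σ + 2 - ε₀)) ^ (-(1:ℝ)/p) := by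
      refine Real.rpow_le_rpow_of_nonpos ?_ h1 ?_
      · exact mul_pos hFTb (Real.rpow_pos_of_pos (div_pos hx0 hTb0) _)
      · rw [neg_div]
        exact neg_nonpos.2 (by positivity)
    rwa [rpow_split hFTb.le hTb0 hx0] at h2
  have hFrint : ∀ s t, Tb ≤ s → Tb ≤ t →
      IntervalIntegrable (fun x => F x ^ (-(1:ℝ)/p)) volume s t := by
    intro s t hs ht
    refine (hFrpowcont.mono ?_).intervalIntegrable
    intro x hx
    rcases Set.mem_uIcc.1 hx with h | h
    · exact le_trans hs h.1
    · exact le_trans ht h.1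
  -- splitting of the tail integral
  have h𝓕sub : ∀ s t, Tb ≤ s → s ≤ t →
      𝓕 s - 𝓕 t = c * ∫ x in s..t, F x ^ (-(1:ℝ)/p) := by
    intro s t hs hst
    rw [h𝓕 s, h𝓕 t]
    have hsplit : ∫ x in Set.Ioi s, F x ^ (-(1:ℝ)/p)
        = (∫ x in Set.Ioc s t, F x ^ (-(1:ℝ)/p)) + ∫ x in Set.Ioi t, F x ^ (-(1:ℝ)/p) := by
      rw [← MeasureTheory.setIntegral_union (Set.Ioc_disjoint_Ioi le_rfl) measurableSet_Ioi
        ((hFint s hs).mono_set Set.Ioc_subset_Ioi_self) (hFint t (le_trans hs hst)),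
        Set.Ioc_union_Ioi_eq_Ioi hst]
    rw [hsplit, intervalIntegral.integral_of_le hst]
    ring
  have h𝓕pos : ∀ t, Tb ≤ t → 0 < 𝓕 t := by
    intro t ht
    rw [h𝓕 t]
    have ht0 : 0 < t := lt_of_lt_of_le hTb0 ht
    refine mul_pos hcpos ?_
    have h1 : 0 < ∫ x in t..(t + 1), F x ^ (-(1:ℝ)/p) := by
      refine intervalIntegral.intervalIntegral_pos_of_pos_on
        (hFrint t (t + 1) ht (by linarith)) (fun x hx => ?_) (lt_add_one t)
      exact Real.rpow_pos_of_pos (hFpos x (lt_of_lt_of_le hTbB (le_trans ht hx.1.le))) _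
    have h2 : ∫ x in Set.Ioc t (t + 1), F x ^ (-(1:ℝ)/p)
        ≤ ∫ x in Set.Ioi t, F x ^ (-(1:ℝ)/p) := by
      refine setIntegral_mono_set (hFint t ht) ?_
        (HasSubset.Subset.eventuallyLE Set.Ioc_subset_Ioi_self)
      refine (ae_restrict_iff' measurableSet_Ioi).2 (Filter.Eventually.of_forall (fun x hx => ?_))
      exact Real.rpow_nonneg (hFpos x (lt_of_lt_of_le hTbB (le_trans ht (Set.mem_Ioi.1 hx).le))).le _
    rw [intervalIntegral.integral_of_le (le_of_lt (lt_add_one t))] at h1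
    linarith
  have h𝓕cont : ContinuousOn 𝓕 (Set.Ici Tb) := by
    have he : ∀ t ∈ Set.Ici Tb, 𝓕 Tb - c * ∫ x in Tb..t, F x ^ (-(1:ℝ)/p) = 𝓕 t := by
      intro t ht
      have := h𝓕sub Tb t le_rfl ht
      linarith
    refine ContinuousOn.congr ?_ (fun t ht => (he t ht).symm)
    exact continuousOn_const.sub (continuousOn_const.mul (primitive_contOn_Ici (fun t ht => hFrint Tb t le_rfl ht)))
  have h𝓕deriv : ∀ t, Tb < t → HasDerivAt 𝓕 (-(c * F t ^ (-(1:ℝ)/p))) t := by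
    intro t ht
    have hmem : Set.Ici Tb ∈ nhds t :=
      Filter.mem_of_superset (Ioi_mem_nhds ht) Set.Ioi_subset_Ici_self
    have heq : 𝓕 =ᶠ[nhds t] fun u => 𝓕 Tb - c * ∫ x in Tb..u, F x ^ (-(1:ℝ)/p) := by
      filter_upwards [hmem] with u hu
      have := h𝓕sub Tb u le_rfl hu
      linarith
    have hFTC : HasDerivAt (fun u => ∫ x in Tb..u, F x ^ (-(1:ℝ)/p)) (F t ^ (-(1:ℝ)/p)) t :=
      intervalIntegral.integral_hasDerivAt_right (hFrint Tb t le_rfl ht.le)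
        ((hFrpowcont.mono Set.Ioi_subset_Ici_self).stronglyMeasurableAtFilter isOpen_Ioi t ht)
        (hFrpowcont.continuousAt hmem)
    have hd := (hFTC.const_mul c).const_sub (𝓕 Tb)
    have hd' : HasDerivAt (fun u => 𝓕 Tb - c * ∫ x in Tb..u, F x ^ (-(1:ℝ)/p))
        (-(c * F t ^ (-(1:ℝ)/p))) t := hd
    exact hd'.congr_of_eventuallyEq heq
  -- key lower bound for 𝓕
  have hmm : (σ + 2 + ε₀) * (-(1:ℝ)/p) = -m := by rw [hmdef]; field_simp
  have hkey : ∀ t, Tb ≤ t → c * (t * F t ^ (-(1:ℝ)/p)) ≤ (m - 1) * 𝓕 t := by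
    intro t ht
    have ht0 : 0 < t := lt_of_lt_of_le hTb0 ht
    have hFt0 : 0 < F t := hFpos t (lt_of_lt_of_le hTbB ht)
    have hintlow : IntegrableOn (fun x => F t ^ (-(1:ℝ)/p) * t ^ m * x ^ (-m)) (Set.Ioi t) := by
      have := MeasureTheory.Integrable.const_mul (integrableOn_Ioi_rpow_of_lt
        (by linarith : -m < -1) ht0) (F t ^ (-(1:ℝ)/p) * t ^ m)
      simpa [mul_assoc, IntegrableOn] using this
    have hmono : ∀ x ∈ Set.Ioi t, F t ^ (-(1:ℝ)/p) * t ^ m * x ^ (-m) ≤ F x ^ (-(1:ℝ)/p) := by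
      intro x hx
      have hx' : t ≤ x := (Set.mem_Ioi.1 hx).le
      have hx0 : 0 < x := lt_of_lt_of_le ht0 hx'
      have h1 : F x ≤ F t * (x / t) ^ (σ + 2 + ε₀) := hFupper t x ht hx'
      have h2 : (F t * (x / t) ^ (σ + 2 + ε₀)) ^ (-(1:ℝ)/p) ≤ F x ^ (-(1:ℝ)/p) := by
        refine Real.rpow_le_rpow_of_nonpos
          (hFpos x (lt_of_lt_of_le hTbB (le_trans ht hx'))) h1 ?_
        rw [neg_div]
        exact neg_nonpos.2 (by positivity)
      rwa [rpow_split hFt0.le ht0 hx0, hmm, neg_neg] at h2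
    have hmono2 := setIntegral_mono_on hintlow (hFint t ht) measurableSet_Ioi hmono
    have hIoi : ∫ x in Set.Ioi t, F t ^ (-(1:ℝ)/p) * t ^ m * x ^ (-m)
        = F t ^ (-(1:ℝ)/p) * t ^ m * (-t ^ (-m + 1) / (-m + 1)) := by
      rw [MeasureTheory.integral_const_mul, integral_Ioi_rpow_of_lt (by linarith : -m < -1) ht0]
    rw [hIoi] at hmono2
    have hYZ : t ^ m * t ^ (-m + 1) = t := by
      rw [← Real.rpow_add ht0]
      norm_num
    have hm1' : m - 1 ≠ 0 := by linarith
    have hlow : F t ^ (-(1:ℝ)/p) * t / (m - 1) ≤ ∫ x in Set.Ioi t, F x ^ (-(1:ℝ)/p) := by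
      have e1 : F t ^ (-(1:ℝ)/p) * t ^ m * (-t ^ (-m + 1) / (-m + 1))
          = F t ^ (-(1:ℝ)/p) * t / (m - 1) := by
        have e0 : (-1:ℝ) / (-m + 1) = 1 / (m - 1) := by
          rw [div_eq_div_iff (by linarith : (-m + 1:ℝ) ≠ 0) hm1']
          ring
        calc F t ^ (-(1:ℝ)/p) * t ^ m * (-t ^ (-m + 1) / (-m + 1))
            = F t ^ (-(1:ℝ)/p) * (t ^ m * t ^ (-m + 1)) * ((-1:ℝ) / (-m + 1)) := by ring
          _ = F t ^ (-(1:ℝ)/p) * t * ((1:ℝ) / (m - 1)) := by rw [hYZ, e0]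
          _ = F t ^ (-(1:ℝ)/p) * t / (m - 1) := by ring
      rw [e1] at hmono2
      exact hmono2
    rw [h𝓕 t]
    calc c * (t * F t ^ (-(1:ℝ)/p))
        = (m - 1) * (c * (F t ^ (-(1:ℝ)/p) * t / (m - 1))) := by
          rw [show (m - 1) * (c * (F t ^ (-(1:ℝ)/p) * t / (m - 1)))
              = c * (F t ^ (-(1:ℝ)/p) * t) * ((m - 1) / (m - 1)) from by ring,
            div_self hm1', mul_one]
          ring
      _ ≤ (m - 1) * (c * ∫ x in Set.Ioi t, F x ^ (-(1:ℝ)/p)) := by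
          have h9 : (0:ℝ) ≤ m - 1 := by linarith
          have h10 := mul_le_mul_of_nonneg_left hlow hcpos.le
          exact mul_le_mul_of_nonneg_left h10 h9
  have hm1pos : (0:ℝ) < m - 1 := by linarith
  -- the function g t = t f t 𝓕 t
  set g : ℝ → ℝ := fun t => t * f t * 𝓕 t with hgdef
  have hgderiv : ∀ t, Tb < t → HasDerivAt g
      ((σ + 2 + φ t) * f t * 𝓕 t - c * (t * f t * F t ^ (-(1:ℝ)/p))) t := by
    intro t ht
    have h1 := (htfderiv t (lt_trans hTbB ht)).mul (h𝓕deriv t ht)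
    refine h1.congr_deriv ?_
    ring
  have hgnonneg : ∀ t, Tb ≤ t → 0 ≤ g t := by
    intro t ht
    have ht0 : (0:ℝ) ≤ t := (lt_of_lt_of_le hTb0 ht).le
    exact mul_nonneg (mul_nonneg ht0 (hfpos t (le_trans hTbB.le ht)).le) (h𝓕pos t ht).le
  have hg'ge : ∀ t, Tb ≤ t → δ * (f t * 𝓕 t)
      ≤ (σ + 2 + φ t) * f t * 𝓕 t - c * (t * f t * F t ^ (-(1:ℝ)/p)) := by
    intro t ht
    have h1 := hkey t ht
    have hf0 : 0 < f t := hfpos t (le_trans hTbB.le ht)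
    have hφt : |φ t| ≤ εφ := hφsmall t (le_trans hTbT₁ ht)
    have hφδ : -δ ≤ φ t := by
      have := neg_abs_le (φ t)
      linarith [hεφδ]
    have h2 := mul_le_mul_of_nonneg_left h1 hf0.le
    have h𝓕t := h𝓕pos t ht
    have hm' : m - 1 = σ + 2 - 2 * δ := by rw [hδdef]; ring
    rw [hm'] at h2
    nlinarith [mul_nonneg (by linarith : (0:ℝ) ≤ φ t + δ) (mul_nonneg hf0.le h𝓕t.le)]
  -- t f t → ∞
  have htftop : Tendsto (fun t => t * f t) atTop atTop := by
    refine tendsto_atTop_mono' atTop ?_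
      (Tendsto.const_mul_atTop (by linarith : (0:ℝ) < σ + 2 - ε₀) hFtop)
    filter_upwards [eventually_ge_atTop Tb] with t ht using (hbound t ht).1
  -- f 𝓕 → ∞
  have hfFtop : Tendsto (fun t => f t * 𝓕 t) atTop atTop := by
    have hmain : ∀ t, Tb ≤ t → c / (m - 1) * (t * f t) ^ (1 - 1/p) ≤ f t * 𝓕 t := by
      intro t ht
      have hf0 : 0 < f t := hfpos t (le_trans hTbB.le ht)
      have ht0 : 0 < t := lt_of_lt_of_le hTb0 ht
      have htf0 : 0 < t * f t := mul_pos ht0 hf0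
      have hFt0 : 0 < F t := hFpos t (lt_of_lt_of_le hTbB ht)
      have hFle : F t ≤ t * f t := by
        have h1 := (hbound t ht).1
        nlinarith
      have h1 : (t * f t) ^ (-(1:ℝ)/p) ≤ F t ^ (-(1:ℝ)/p) := by
        refine Real.rpow_le_rpow_of_nonpos hFt0 hFle ?_
        rw [neg_div]
        exact neg_nonpos.2 (by positivity)
      have h2 := hkey t ht
      have h3 : c * (t * (t * f t) ^ (-(1:ℝ)/p)) ≤ (m - 1) * 𝓕 t :=
        le_trans (mul_le_mul_of_nonneg_left (mul_le_mul_of_nonneg_left h1 ht0.le) hcpos.le) h2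
      have h4 := mul_le_mul_of_nonneg_left h3 hf0.le
      have e1 : t * f t * (t * f t) ^ (-(1:ℝ)/p) = (t * f t) ^ (1 - 1/p) := by
        have e0 : (1:ℝ) - 1/p = 1 + (-(1:ℝ)/p) := by ring
        rw [e0, Real.rpow_add htf0, Real.rpow_one]
      have h5 : c * ((t * f t) ^ (1 - 1/p)) = f t * (c * (t * (t * f t) ^ (-(1:ℝ)/p))) := by
        rw [← e1]; ring
      rw [div_mul_eq_mul_div, div_le_iff₀ hm1pos, h5]
      calc f t * (c * (t * (t * f t) ^ (-(1:ℝ)/p))) ≤ f t * ((m - 1) * 𝓕 t) := h4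
        _ = f t * 𝓕 t * (m - 1) := by ring
    have h6 : Tendsto (fun t => c / (m - 1) * (t * f t) ^ (1 - 1/p)) atTop atTop := by
      refine Tendsto.const_mul_atTop (div_pos hcpos hm1pos) ?_
      have hexp : (0:ℝ) < 1 - 1/p := by
        have : 1/p < 1 := by rw [div_lt_one hp0]; linarith
        linarith
      exact (tendsto_rpow_atTop hexp).comp htftop
    refine tendsto_atTop_mono' atTop ?_ h6
    filter_upwards [eventually_ge_atTop Tb] with t ht using hmain t ht
  -- g → ∞
  have hgtop : Tendsto g atTop atTop := by
    refine tendsto_atTop_mono' atTop ?_ hfFtop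
    filter_upwards [eventually_ge_atTop (max Tb 1)] with t ht
    have h1 : Tb ≤ t := le_trans (le_max_left _ _) ht
    have h2 : (1:ℝ) ≤ t := le_trans (le_max_right _ _) ht
    have h3 : 0 ≤ f t * 𝓕 t :=
      mul_nonneg (hfpos t (le_trans hTbB.le h1)).le (h𝓕pos t h1).le
    show f t * 𝓕 t ≤ t * f t * 𝓕 t
    nlinarith [mul_nonneg (by linarith : (0:ℝ) ≤ t - 1) h3]
  -- φ / 𝓕 → 0
  have hφ𝓕 : Tendsto (fun t => φ t / 𝓕 t) atTop (nhds 0) := by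
    refine hrate.congr' ?_
    filter_upwards [eventually_gt_atTop (max Tb B)] with t ht
    have htB : B < t := lt_of_le_of_lt (le_max_right _ _) ht
    have ht0 : 0 < t := lt_trans hB htB
    have hf0 : f t ≠ 0 := (hfpos t htB.le).ne'
    have hd : deriv f t = (σ + 1 + φ t) * f t / t := (hfderiv t htB).deriv
    have he : t * ((σ + 1 + φ t) * f t / t) / f t - (σ + 1) = φ t := by
      field_simp
      ring
    rw [hd, he]
  -- interval integrability of f 𝓕
  have hf𝓕int : ∀ s t, Tb ≤ s → Tb ≤ t →
      IntervalIntegrable (fun x => f x * 𝓕 x) volume s t := by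
    intro s t hs ht
    have hsub : Set.uIcc s t ⊆ Set.Ici Tb := by
      intro x hx
      rcases Set.mem_uIcc.1 hx with h | h
      · exact le_trans hs h.1
      · exact le_trans ht h.1
    exact ((hfcont.mono (hsub.trans hIciTb)).mul (h𝓕cont.mono hsub)).intervalIntegrable
  -- integral bound via FTC for g
  have hintbound : ∀ s t, Tb < s → s ≤ t →
      δ * ∫ x in s..t, f x * 𝓕 x ≤ g t - g s := by
    intro s t hs hst
    have hsub : Set.uIcc s t ⊆ Set.Ici Tb := by
      rw [Set.uIcc_of_le hst]
      exact fun x hx => le_trans hs.le hx.1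
    have hder : ∀ x ∈ Set.uIcc s t, HasDerivAt g
        ((σ + 2 + φ x) * f x * 𝓕 x - c * (x * f x * F x ^ (-(1:ℝ)/p))) x := by
      intro x hx
      rw [Set.uIcc_of_le hst] at hx
      exact hgderiv x (lt_of_lt_of_le hs hx.1)
    have hcontg' : IntervalIntegrable
        (fun x => (σ + 2 + φ x) * f x * 𝓕 x - c * (x * f x * F x ^ (-(1:ℝ)/p))) volume s t := by
      refine ContinuousOn.intervalIntegrable ?_
      refine ContinuousOn.sub ?_ ?_
      · exact ((continuousOn_const.add (hφcont.mono (hsub.trans hIciTb))).mul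
          (hfcont.mono (hsub.trans hIciTb))).mul (h𝓕cont.mono hsub)
      · exact continuousOn_const.mul ((continuousOn_id.mul
          (hfcont.mono (hsub.trans hIciTb))).mul (hFrpowcont.mono hsub))
    have heq := intervalIntegral.integral_eq_sub_of_hasDerivAt hder hcontg'
    have hmono3 : ∫ x in s..t, δ * (f x * 𝓕 x)
        ≤ ∫ x in s..t, ((σ + 2 + φ x) * f x * 𝓕 x - c * (x * f x * F x ^ (-(1:ℝ)/p))) := by
      refine intervalIntegral.integral_mono_on hst
        ((hf𝓕int s t hs.le (le_trans hs.le hst)).const_mul δ) hcontg' ?_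
      exact fun x hx => hg'ge x (le_trans hs.le hx.1)
    rw [intervalIntegral.integral_const_mul] at hmono3
    rw [heq] at hmono3
    exact hmono3
  -- the numerator N
  set N : ℝ → ℝ := fun t => t * f t - (σ + 2) * F t with hNdef
  have hNg : Tendsto (fun t => N t / g t) atTop (nhds 0) := by
    rw [NormedAddCommGroup.tendsto_nhds_zero]
    intro ε hε
    obtain ⟨T₂', hT₂'⟩ := Metric.tendsto_atTop.1 hφ𝓕 (ε * δ / 4) (by positivity)
    set T₂ : ℝ := max T₂' (Tb + 1) with hT₂def
    have hT₂Tb : Tb < T₂ := lt_of_lt_of_le (lt_add_one Tb) (le_max_right _ _)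
    have hφbd : ∀ x, T₂ ≤ x → |φ x| ≤ ε * δ / 4 * 𝓕 x := by
      intro x hx
      have h := hT₂' x (le_trans (le_max_left _ _) hx)
      rw [Real.dist_eq, sub_zero, abs_div] at h
      have h𝓕x := h𝓕pos x (le_trans hT₂Tb.le hx)
      rw [abs_of_pos h𝓕x, div_lt_iff₀ h𝓕x] at h
      exact h.le
    obtain ⟨T₃', hT₃'⟩ := Filter.eventually_atTop.1
      (hgtop.eventually_ge_atTop (max 1 (4 * |N T₂| / ε)))
    filter_upwards [eventually_ge_atTop (max T₃' T₂)] with t ht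
    have htT₂ : T₂ ≤ t := le_trans (le_max_right _ _) ht
    have htTb : Tb ≤ t := le_trans hT₂Tb.le htT₂
    have hgt : max 1 (4 * |N T₂| / ε) ≤ g t := hT₃' t (le_trans (le_max_left _ _) ht)
    have hg1 : (1:ℝ) ≤ g t := le_trans (le_max_left _ _) hgt
    have hgpos : 0 < g t := lt_of_lt_of_le one_pos hg1
    -- identity for N
    have hid : N t - N T₂ = ∫ x in T₂..t, φ x * f x := by
      have h := hkeyid T₂ t (lt_trans hTbB hT₂Tb) htT₂
      simp only [hNdef]
      linarith
    -- bound on the integral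
    have hBT₂ : B ≤ T₂ := le_trans hTbB.le hT₂Tb.le
    have hints : |∫ x in T₂..t, φ x * f x| ≤ ε / 4 * g t := by
      have h1 : |∫ x in T₂..t, φ x * f x| ≤ ∫ x in T₂..t, |φ x * f x| :=
        intervalIntegral.abs_integral_le_integral_abs htT₂
      have h2 : ∫ x in T₂..t, |φ x * f x| ≤ ∫ x in T₂..t, ε * δ / 4 * (f x * 𝓕 x) := by
        refine intervalIntegral.integral_mono_on htT₂
          ((hφfint T₂ t hBT₂ (le_trans hBT₂ htT₂)).abs)
          ((hf𝓕int T₂ t hT₂Tb.le htTb).const_mul _) (fun x hx => ?_)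
        have hxB : B ≤ x := le_trans hBT₂ hx.1
        rw [abs_mul, abs_of_pos (hfpos x hxB)]
        calc |φ x| * f x ≤ ε * δ / 4 * 𝓕 x * f x :=
              mul_le_mul_of_nonneg_right (hφbd x hx.1) (hfpos x hxB).le
          _ = ε * δ / 4 * (f x * 𝓕 x) := by ring
      rw [intervalIntegral.integral_const_mul] at h2
      have h3 := hintbound T₂ t hT₂Tb htT₂
      have h4 : 0 ≤ g T₂ := hgnonneg T₂ hT₂Tb.le
      have h5 : 0 ≤ ∫ x in T₂..t, f x * 𝓕 x := by
        refine intervalIntegral.integral_nonneg htT₂ (fun x hx => ?_)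
        exact mul_nonneg (hfpos x (le_trans hBT₂ hx.1)).le
          (h𝓕pos x (le_trans hT₂Tb.le hx.1)).le
      have h6 : δ * ∫ x in T₂..t, f x * 𝓕 x ≤ g t := by linarith
      have h7 := mul_le_mul_of_nonneg_left h6 (by positivity : (0:ℝ) ≤ ε / 4)
      calc |∫ x in T₂..t, φ x * f x| ≤ ∫ x in T₂..t, |φ x * f x| := h1
        _ ≤ ε * δ / 4 * ∫ x in T₂..t, f x * 𝓕 x := h2
        _ = ε / 4 * (δ * ∫ x in T₂..t, f x * 𝓕 x) := by ring
        _ ≤ ε / 4 * g t := h7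
    have hKg : |N T₂| ≤ ε / 4 * g t := by
      have h6 : 4 * |N T₂| / ε ≤ g t := le_trans (le_max_right _ _) hgt
      rw [div_le_iff₀ hε] at h6
      linarith
    have hNbd : |N t| ≤ ε / 2 * g t := by
      have h7 : N t = N T₂ + ∫ x in T₂..t, φ x * f x := by linarith
      rw [h7]
      calc |N T₂ + ∫ x in T₂..t, φ x * f x| ≤ |N T₂| + |∫ x in T₂..t, φ x * f x| := abs_add_le _ _
        _ ≤ ε / 4 * g t + ε / 4 * g t := add_le_add hKg hints
        _ = ε / 2 * g t := by ring
    rw [Real.norm_eq_abs, abs_div, abs_of_pos hgpos, div_lt_iff₀ hgpos]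
    calc |N t| ≤ ε / 2 * g t := hNbd
      _ < ε * g t := by
          have := mul_pos hε hgpos
          linarith
  -- final assembly
  have hfinal : ∀ᶠ t in atTop, (F t / (t * f t) - 1 / (σ + 2)) / 𝓕 t
      = -(1 / (σ + 2)) * (N t / g t) := by
    filter_upwards [eventually_ge_atTop Tb] with t ht
    have ht0 : 0 < t := lt_of_lt_of_le hTb0 ht
    have hf0 : 0 < f t := hfpos t (le_trans hTbB.le ht)
    have h𝓕0 : 0 < 𝓕 t := h𝓕pos t ht
    have hσ0 : (σ:ℝ) + 2 ≠ 0 := by linarith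
    simp only [hNdef, hgdef]
    field_simp
    ring
  have hlim : Tendsto (fun t => -(1 / (σ + 2)) * (N t / g t)) atTop (nhds 0) := by
    have := hNg.const_mul (-(1 / (σ + 2)))
    simpa using this
  exact Tendsto.congr' (by filter_upwards [hfinal] with t h using h.symm) hlim
end
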